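/- arXiv:1704.01874 — 12 statements merged into one kernel-verified Lean document; each statement's English description precedes it below -/
import Mathlib

section
/- If {a,b,c} is a D(4)-triple with a<b<c (i.e., ab+4, ac+4, bc+4 are all perfect squares), and r = √(ab+4), then either c = a+b+2r or c > max{ab, 4b}. -/
lemma even_shift (x m : ℤ) (h : m + 4 = x^2) : (Even x ↔ Even m) := by
  have h2 : Even (x^2) ↔ Even x := by simp [Int.even_pow]
  have h1 : Even (x^2) ↔ Even (m+4) := by rw [h]
  have h3 : Even (m+4) ↔ Even m := by
    rw [Int.even_iff, Int.even_iff]; omega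
  tauto

lemma parity_trick (A B C R S T : ℤ)
    (eR : Even R ↔ Even (A*B)) (eS : Even S ↔ Even (A*C)) (eT : Even T ↔ Even (B*C)) :
    Even (A*B*C) ↔ Even (R*S*T) := by
  rw [Int.even_mul, Int.even_mul, Int.even_mul, Int.even_mul, eR, eS, eT,
    Int.even_mul, Int.even_mul, Int.even_mul]
  tauto

lemma rst_gt (x y : ℤ) (hx : 0 ≤ x) (hy : 0 < y) (hsq : y^2 < x^2) : y < x := by
  nlinarith

lemma sq_ge9 (n : ℤ) (h : 5 ≤ n^2) : 9 ≤ n^2 := by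
  rcases show n ≤ -3 ∨ (-2 ≤ n ∧ n ≤ 2) ∨ 3 ≤ n by omega with h1 | h1 | h1
  · nlinarith
  · obtain ⟨ha', hb'⟩ := h1; interval_cases n <;> norm_num at h
  · nlinarith

lemma sq_ge4 (p : ℤ) (h : 6 ≤ 4*p^2) : 4 ≤ p^2 := by
  rcases show p ≤ -2 ∨ (-1 ≤ p ∧ p ≤ 1) ∨ 2 ≤ p by omega with h1 | h1 | h1
  · nlinarith
  · obtain ⟨ha', hb'⟩ := h1; interval_cases p <;> norm_num at h
  · nlinarith

set_option maxHeartbeats 1000000 in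
lemma key (A B C R S T : ℤ) (hA : 1 ≤ A) (hAB : A < B) (hBC : B < C)
    (hR : A*B + 4 = R^2) (hS : A*C + 4 = S^2) (hT : B*C + 4 = T^2)
    (hR0 : 0 < R) (hS0 : 0 ≤ S) (hT0 : 0 ≤ T)
    (hne : C ≠ A + B + 2*R) : A*B < C ∧ 4*B < C := by
  have hB : 2 ≤ B := by linarith
  have hC : 3 ≤ C := by linarith
  have hRA : A + 1 ≤ R := by
    by_contra h
    push_neg at h
    have h' : R ≤ A := by omega
    have h1 : R*R ≤ A*A := mul_le_mul h' h' (by linarith) (by linarith)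
    have h2 : A*A < A*B := by
      have := mul_lt_mul_of_pos_left hAB (show (0:ℤ) < A by linarith)
      linarith only [this]
    linarith only [hR, h1, h2, pow_two R]
  obtain ⟨D2, hD2⟩ : ∃ d : ℤ, d = 2*(A+B+C) + A*B*C - R*S*T := ⟨_, rfl⟩
  obtain ⟨E2, hE2⟩ : ∃ e : ℤ, e = 2*(A+B+C) + A*B*C + R*S*T := ⟨_, rfl⟩
  have idDE : D2 * E2 = 4*((C-A-B)^2 - 4*R^2) := by
    linear_combination ((A*C+4)*(B*C+4) - 16) * hR + (R^2*(B*C+4)) * hS + (R^2*S^2) * hT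
      + E2 * hD2 + (2*(A+B+C) + A*B*C - R*S*T) * hE2
  have idC : (S*T - R*C)^2 = 2*C*D2 + 16 := by
    linear_combination (-(T^2)) * hS + (-(A*C+4)) * hT + (-(C^2)) * hR + (-(2*C)) * hD2
  have idA : (A*T - R*S)^2 = 2*A*D2 + 16 := by
    linear_combination (-(A^2)) * hT + (-(S^2)) * hR + (-(A*B+4)) * hS + (-(2*A)) * hD2
  have hRSTnn : 0 ≤ R*S*T := mul_nonneg (mul_nonneg hR0.le hS0) hT0
  have hABC : 0 < A*B*C :=
    mul_pos (mul_pos (by linarith) (by linarith)) (by linarith)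
  have hRST : A*B*C + 1 ≤ R*S*T := by
    have hdiff : (R*S*T)^2 = (A*B*C)^2 + 4*(A*B*C)*(A+B+C) + 16*(A*B+A*C+B*C) + 64 := by
      linear_combination (-((A*C+4)*(B*C+4))) * hR + (-(R^2*(B*C+4))) * hS + (-(R^2*S^2)) * hT
    have hsq' : (A*B*C)^2 < (R*S*T)^2 := by
      have p1 : 0 < (A*B*C)*(A+B+C) := mul_pos hABC (by linarith)
      have p2 : 0 < A*B := mul_pos (by linarith) (by linarith)
      have p3 : 0 < A*C := mul_pos (by linarith) (by linarith)
      have p4 : 0 < B*C := mul_pos (by linarith) (by linarith)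
      linarith only [hdiff, p1, p2, p3, p4]
    have := rst_gt (R*S*T) (A*B*C) hRSTnn hABC hsq'
    linarith only [this]
  have hE2pos : 0 < E2 := by
    have : 0 < 2*(A+B+C) := by linarith
    linarith only [hE2, hRST, hABC, this]
  have hCD2 : 0 ≤ 2*C*D2 + 16 := idC ▸ sq_nonneg _
  -- parity of D2
  have eR := even_shift R (A*B) hR
  have eS := even_shift S (A*C) hS
  have eT := even_shift T (B*C) hT
  have heq : Even (A*B*C) ↔ Even (R*S*T) := parity_trick A B C R S T eR eS eT
  have hEvenD2 : Even D2 := by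
    obtain ⟨k, hk⟩ : Even (A*B*C - R*S*T) := Int.even_sub.mpr heq
    exact ⟨A+B+C+k, by linear_combination hD2 + hk⟩
  clear eR eS eT heq idC hS hT hS0 hT0
  rcases lt_trichotomy C (A+B+2*R) with hlt | heqc | hgt
  · exfalso
    have f2 : 0 < C - A - B + 2*R := by linarith
    have hx2 : (C-A-B)^2 - 4*R^2 < 0 := by
      linarith only [mul_pos (show (0:ℤ) < A + B + 2*R - C by linarith) f2]
    have hD2neg : D2 < 0 := by
      by_contra h
      push_neg at h
      have h0 : 0 ≤ D2 * E2 := mul_nonneg h (le_of_lt hE2pos)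
      linarith only [h0, idDE, hx2]
    have hD2le : D2 ≤ -2 := by
      obtain ⟨k, hk⟩ := hEvenD2; omega
    have hC4 : C ≤ 4 := by
      have h1 : C*D2 ≤ C*(-2) := mul_le_mul_of_nonneg_left hD2le (by linarith)
      linarith only [hCD2, h1]
    have hA2 : A ≤ 2 := by linarith
    have hB3 : B ≤ 3 := by linarith
    have hRle : R ≤ 3 := by
      by_contra h
      push_neg at h
      have h4 : (4:ℤ) ≤ R := by omega
      have h1 : (4:ℤ)*4 ≤ R*R := mul_le_mul h4 h4 (by norm_num) (by linarith)
      have h2 : A*B ≤ 2*3 := mul_le_mul hA2 hB3 (by linarith) (by norm_num)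
      linarith only [hR, h1, h2, pow_two R]
    clear hD2 hE2 idDE idA hRST hRSTnn hABC hE2pos hEvenD2 hD2neg hD2le
      hx2 f2 hne hlt hC4
    interval_cases A <;> interval_cases B <;> interval_cases R <;> norm_num at hR
  · exact absurd heqc hne
  · have f1 : 0 < C - A - B - 2*R := by linarith
    have f2 : 0 < C - A - B + 2*R := by linarith
    have hD2pos : 0 < D2 := by
      by_contra h
      push_neg at h
      have h0 : D2 * E2 ≤ 0 := mul_nonpos_of_nonpos_of_nonneg h (le_of_lt hE2pos)
      linarith only [h0, idDE, mul_pos f1 f2]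
    have hD2ge : 2 ≤ D2 := by
      obtain ⟨k, hk⟩ := hEvenD2; omega
    have hmain : A*B + A + B + 2 ≤ C := by
      by_contra hcon
      push_neg at hcon
      have hxpos : 0 < C - A - B := by linarith
      have h2E : 2*E2 ≤ D2*E2 := by
        have h' : 0 ≤ (D2-2)*E2 := mul_nonneg (by linarith) (by linarith)
        linarith only [h']
      have hprod : 0 ≤ (C-A-B)*(A*B+1-(C-A-B)) :=
        mul_nonneg (by linarith) (by linarith)
      have ha2b : 0 < A*A*B :=
        mul_pos (mul_pos (by linarith) (by linarith)) (by linarith)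
      have hab2 : 0 < A*B*B :=
        mul_pos (mul_pos (by linarith) (by linarith)) (by linarith)
      have hab : 0 < A*B := mul_pos (by linarith) (by linarith)
      linarith only [h2E, hprod, idDE, hE2, hRST, hR, ha2b, hab2, hab, hA, hB, hC]
    have habC : A*B < C := by linarith only [hmain, hA, hB]
    refine ⟨habC, ?_⟩
    rcases show A = 1 ∨ A = 2 ∨ 3 ≤ A by omega with h1 | h2 | h3
    · -- A = 1
      subst h1
      by_contra hc4
      push_neg at hc4
      have hm : (T - R*S)^2 = 2*D2 + 16 := by linear_combination idA
      have hev : Even (T - R*S) := by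
        have h2 : Even ((T - R*S)^2) := ⟨D2 + 8, by linarith only [hm]⟩
        exact (Int.even_pow.mp h2).1
      obtain ⟨n, hn⟩ := hev
      have hD2n : 2*D2 = 4*n^2 - 16 := by
        linear_combination -1 * hm + (T - R*S + n + n) * hn
      have h5 : 5 ≤ n^2 := by linarith only [hD2n, hD2ge]
      have hn2 : 9 ≤ n^2 := sq_ge9 n h5
      have hD10 : 10 ≤ D2 := by linarith only [hD2n, hn2]
      have h10E : 10*E2 ≤ D2*E2 := by
        have h' : 0 ≤ (D2-10)*E2 := mul_nonneg (by linarith) (by linarith)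
        linarith only [h']
      have hsq1 : 0 ≤ (4*B - C)*(2*B + C - 2) :=
        mul_nonneg (by linarith) (by linarith)
      have hbc1 : 0 ≤ B*(C - 2*B - 3) :=
        mul_nonneg (by linarith) (by linarith only [hmain])
      have hBB : 0 < B*B := mul_pos (by linarith) (by linarith)
      linarith only [h10E, hsq1, hbc1, idDE, hE2, hRST, hR, hBB, hB, hC]
    · -- A = 2
      subst h2
      by_contra hc4
      push_neg at hc4
      have hm : (2*T - R*S)^2 = 4*D2 + 16 := by linear_combination idA
      have hev : Even (2*T - R*S) := by
        have h2 : Even ((2*T - R*S)^2) := ⟨2*D2 + 8, by linarith only [hm]⟩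
        exact (Int.even_pow.mp h2).1
      obtain ⟨n, hn⟩ := hev
      have hD2n : 4*D2 = 4*n^2 - 16 := by
        linear_combination -1 * hm + (2*T - R*S + n + n) * hn
      have hDn : D2 = n^2 - 4 := by linarith only [hD2n]
      have hnev : Even n := by
        have h2 : Even (n^2) := by
          obtain ⟨k, hk⟩ := hEvenD2; exact ⟨k + 2, by omega⟩
        exact (Int.even_pow.mp h2).1
      obtain ⟨p, hp⟩ := hnev
      have hD2p : D2 = 4*p^2 - 4 := by linear_combination hDn + (n + p + p) * hp
      have hp2 : 4 ≤ p^2 := sq_ge4 p (by linarith only [hD2p, hD2ge])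
      have hD12 : 12 ≤ D2 := by linarith only [hD2p, hp2]
      have h12E : 12*E2 ≤ D2*E2 := by
        have h' : 0 ≤ (D2-12)*E2 := mul_nonneg (by linarith) (by linarith)
        linarith only [h']
      have hsq2 : 0 ≤ (4*B - C)*(2*B + C - 4) :=
        mul_nonneg (by linarith) (by linarith)
      have hbc2 : 0 ≤ B*(C - 3*B - 4) :=
        mul_nonneg (by linarith) (by linarith only [hmain])
      have hBB : 0 < B*B := mul_pos (by linarith) (by linarith)
      linarith only [h12E, hsq2, hbc2, idDE, hE2, hRST, hR, hBB, hB, hC]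
    · have h3b : 3*B ≤ A*B := mul_le_mul_of_nonneg_right h3 (by linarith)
      linarith only [h3b, hmain, hA, hB]

/-- If {a,b,c} is a D(4)-triple with a<b<c and r = √(ab+4), then either
c = a+b+2r or c > max{ab, 4b}. -/
theorem stmt0 (a b c r : ℕ) (ha : 0 < a) (hab : a < b) (hbc : b < c)
    (hr : a * b + 4 = r ^ 2) (hrpos : 0 < r)
    (hs : ∃ s : ℕ, a * c + 4 = s ^ 2) (ht : ∃ t : ℕ, b * c + 4 = t ^ 2) :
    c = a + b + 2 * r ∨ c > max (a * b) (4 * b) := by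
  by_cases hceq : c = a + b + 2 * r
  · exact Or.inl hceq
  right
  obtain ⟨s, hs⟩ := hs
  obtain ⟨t, ht⟩ := ht
  have h := key (a : ℤ) (b : ℤ) (c : ℤ) (r : ℤ) (s : ℤ) (t : ℤ)
    (by exact_mod_cast ha) (by exact_mod_cast hab) (by exact_mod_cast hbc)
    (by exact_mod_cast hr) (by exact_mod_cast hs) (by exact_mod_cast ht)
    (by exact_mod_cast hrpos) (by positivity) (by positivity)
    (by exact_mod_cast hceq)
  obtain ⟨h1, h2⟩ := h
  have h1' : a * b < c := by exact_mod_cast h1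
  have h2' : 4 * b < c := by exact_mod_cast h2
  exact max_lt h1' h2'
end

section
/- Let {a,b,c} be a D(4)-triple with a<b<c, and define d₊ = a+b+c+(abc + √((ab+4)(ac+4)(bc+4)))/2. Then abc + c < d₊ < abc + 4c. -/
private lemma d4_key (A B C R S T n : ℤ) (hA1 : 1 ≤ A) (hAB : A < B) (hBC : B < C)
    (hC5 : 5 ≤ C) (hR3 : 3 ≤ R) (hS1 : 1 ≤ S) (hT1 : 1 ≤ T)
    (hr' : A * B + 4 = R ^ 2)
    (id2 : n * (C * R - n) = C ^ 2 - (A + B) * C - 4)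
    (hst : S * T = C * R - 2 * n) :
    A + B + 2 * R ≤ C := by
  have hB2 : 2 ≤ B := by linarith
  have hCRpos : 15 ≤ C * R := by
    have := mul_le_mul hC5 hR3 (by norm_num) (by linarith)
    linarith
  have hSTpos : 1 ≤ S * T := by
    have := mul_le_mul hS1 hT1 (by norm_num) (by linarith)
    linarith
  rcases lt_trichotomy n 0 with hneg | h0 | hpos
  · rcases eq_or_lt_of_le (by omega : n ≤ -1) with hm1 | hle2
    · exfalso
      have h3 : C * (C - A - B + R) = 3 := by
        linear_combination -id2 + (C * R + 1 - n) * hm1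
      have hdvd : C ∣ 3 := ⟨C - A - B + R, h3.symm⟩
      have := Int.le_of_dvd (by norm_num) hdvd
      linarith
    · exfalso
      have hn2 : n ≤ -2 := by omega
      have hprod : 0 ≤ (-n - 2) * (C * R - n) :=
        mul_nonneg (by linarith) (by linarith)
      have hE : C ^ 2 - (A + B) * C - 4 ≤ -2 * (C * R + 2) := by
        nlinarith [id2, hprod]
      have hAB' : C + 2 * R ≤ A + B := by
        by_contra hcc
        push_neg at hcc
        have h1 : 1 ≤ C - A - B + 2 * R := by linarith
        have h2 : C ≤ C * (C - A - B + 2 * R) :=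
          le_mul_of_one_le_right (by linarith) h1
        nlinarith [hE, h2]
      have hA2R : 2 * R + 1 ≤ A := by linarith
      have hAB2 : (2 * R + 1) * (2 * R + 1) ≤ A * B :=
        mul_le_mul hA2R (by linarith) (by linarith) (by linarith)
      nlinarith [hr', hAB2, hR3]
  · exfalso
    have h4 : C * (C - A - B) = 4 := by
      linear_combination -id2 + (C * R - n) * h0
    have hdvd : C ∣ 4 := ⟨C - A - B, h4.symm⟩
    have := Int.le_of_dvd (by norm_num) hdvd
    linarith
  · rcases eq_or_lt_of_le (by omega : 1 ≤ n) with hm1 | hge2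
    · exfalso
      have h3 : C * (C - A - B - R) = 3 := by
        linear_combination -id2 - (C * R - n - 1) * hm1
      have hdvd : C ∣ 3 := ⟨C - A - B - R, h3.symm⟩
      have := Int.le_of_dvd (by norm_num) hdvd
      linarith
    · have hn2 : 2 ≤ n := by omega
      have hnCR : 2 * n ≤ C * R - 1 := by linarith [hSTpos, hst]
      have hprod : 0 ≤ (n - 2) * (C * R - n - 2) :=
        mul_nonneg (by linarith) (by linarith)
      have hE : 2 * (C * R) - 4 ≤ C ^ 2 - (A + B) * C - 4 := by
        nlinarith [id2, hprod]
      by_contra hcon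
      push_neg at hcon
      have h2 : C * (C - A - B - 2 * R) ≤ C * (-1) :=
        mul_le_mul_of_nonneg_left (by linarith) (by linarith)
      nlinarith [hE, h2]

private lemma d4_low (A B C R S T : ℤ) (hA1 : 1 ≤ A) (hAB : A < B) (hBC : B < C)
    (hR1 : 1 ≤ R) (hS1 : 1 ≤ S) (hT1 : 1 ≤ T)
    (hprod : (R * S * T) ^ 2 = (A * B + 4) * (A * C + 4) * (B * C + 4)) :
    A * B * C < R * S * T := by
  have hApos : 0 < A := by linarith
  have hBpos : 0 < B := by linarith
  have hCpos : 0 < C := by linarith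
  have hABC : 0 < A * B * C := mul_pos (mul_pos hApos hBpos) hCpos
  have hRSTpos : 0 < R * S * T :=
    mul_pos (mul_pos (by linarith) (by linarith)) (by linarith)
  have hiden : (R * S * T) ^ 2 - (A * B * C) ^ 2
      = 4 * (A * B * C * (A + B + C) + 4 * (A * B + A * C + B * C) + 16) := by
    linear_combination hprod
  have hpos1 : 0 < A * B * C * (A + B + C) := mul_pos hABC (by linarith)
  have hpos2 : 0 < A * B + A * C + B * C := by
    have h1 : 0 < A * B := mul_pos hApos hBpos
    have h2 : 0 < A * C := mul_pos hApos hCpos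
    have h3 : 0 < B * C := mul_pos hBpos hCpos
    linarith
  have hsqlt : (A * B * C) ^ 2 < (R * S * T) ^ 2 := by linarith
  by_contra hco
  push_neg at hco
  have := mul_le_mul hco hco (by linarith) (by linarith)
  nlinarith [this, hsqlt]

private lemma d4_up (A B C R S T : ℤ) (hA1 : 1 ≤ A) (hAB : A < B) (hBC : B < C)
    (hC5 : 5 ≤ C) (hR3 : 3 ≤ R) (hS1 : 1 ≤ S) (hT1 : 1 ≤ T)
    (hkey : A + B + 2 * R ≤ C)
    (hprod : (R * S * T) ^ 2 = (A * B + 4) * (A * C + 4) * (B * C + 4)) :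
    R * S * T < A * B * C + 6 * C - 2 * A - 2 * B := by
  have hB2 : 2 ≤ B := by linarith
  have hQ : 0 < 48 * (A * B * C) + 36 * C ^ 2 + 4 * A ^ 2 + 4 * B ^ 2
      - 8 * (A * B) - 40 * (A * C) - 40 * (B * C) - 64 := by
    have h3 : 0 ≤ (B - 2) * (20 * (A * C)) := mul_nonneg (by linarith) (by positivity)
    have h4 : 0 ≤ (A - 1) * (24 * (B * C)) := mul_nonneg (by linarith) (by positivity)
    have h5 : 0 ≤ (C - B - 1) * (36 * C) := mul_nonneg (by linarith) (by positivity)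
    have h6 : 0 ≤ (3 * C - A) * (8 * (B * C)) := mul_nonneg (by linarith) (by positivity)
    nlinarith [h3, h4, h5, h6, hC5, sq_nonneg (A - B), sq_nonneg A, sq_nonneg B]
  have hiden : (A * B * C + 6 * C - 2 * A - 2 * B) ^ 2 - (R * S * T) ^ 2
      = (C - A - B - 2 * R) * (8 * (A * B * C)) + (R - 3) * (16 * (A * B * C))
        + (48 * (A * B * C) + 36 * C ^ 2 + 4 * A ^ 2 + 4 * B ^ 2
          - 8 * (A * B) - 40 * (A * C) - 40 * (B * C) - 64) := by
    linear_combination -hprod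
  have h1 : 0 ≤ (C - A - B - 2 * R) * (8 * (A * B * C)) :=
    mul_nonneg (by linarith) (by positivity)
  have h2 : 0 ≤ (R - 3) * (16 * (A * B * C)) :=
    mul_nonneg (by linarith) (by positivity)
  have hsqlt : (R * S * T) ^ 2 < (A * B * C + 6 * C - 2 * A - 2 * B) ^ 2 := by linarith
  by_contra hco
  push_neg at hco
  have hXpos : 0 < A * B * C + 6 * C - 2 * A - 2 * B := by nlinarith
  have := mul_le_mul hco hco (by linarith) (by positivity)
  nlinarith [this, hsqlt]

/-- For a D(4)-triple a<b<c with d₊ = a+b+c+(abc+rst)/2, we have abc+c < d₊ < abc+4c. -/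
theorem stmt1 (a b c d r s t : ℕ) (ha : 0 < a) (hab : a < b) (hbc : b < c)
    (hr : a * b + 4 = r ^ 2) (hs : a * c + 4 = s ^ 2) (ht : b * c + 4 = t ^ 2)
    (hrpos : 0 < r) (hspos : 0 < s) (htpos : 0 < t)
    (hd : 2 * d = 2 * (a + b + c) + a * b * c + r * s * t) :
    a * b * c + c < d ∧ d < a * b * c + 4 * c := by
  have hb2 : 2 ≤ b := by omega
  have hc3 : 3 ≤ c := by omega
  have hr3 : 3 ≤ r := by
    by_contra h
    push_neg at h
    interval_cases r <;> nlinarith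
  have hc5 : 5 ≤ c := by
    by_contra h
    push_neg at h
    have h9 : 9 ≤ r ^ 2 := by nlinarith
    have hab5 : 5 ≤ a * b := by linarith [hr, h9]
    have hb3 : b ≤ 3 := by omega
    interval_cases b <;> interval_cases a <;> try omega
    · have hr4 : r ≤ 3 := by nlinarith
      interval_cases r <;> norm_num at hr
  have hr' : (a:ℤ) * (b:ℤ) + 4 = (r:ℤ) ^ 2 := by exact_mod_cast hr
  have hs' : (a:ℤ) * (c:ℤ) + 4 = (s:ℤ) ^ 2 := by exact_mod_cast hs
  have ht' : (b:ℤ) * (c:ℤ) + 4 = (t:ℤ) ^ 2 := by exact_mod_cast ht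
  have hA1 : 1 ≤ (a:ℤ) := by exact_mod_cast ha
  have hAB : (a:ℤ) < (b:ℤ) := by exact_mod_cast hab
  have hBC : (b:ℤ) < (c:ℤ) := by exact_mod_cast hbc
  have hC5 : 5 ≤ (c:ℤ) := by exact_mod_cast hc5
  have hR3 : 3 ≤ (r:ℤ) := by exact_mod_cast hr3
  have hS1 : 1 ≤ (s:ℤ) := by exact_mod_cast hspos
  have hT1 : 1 ≤ (t:ℤ) := by exact_mod_cast htpos
  have id1 : ((c:ℤ) * (r:ℤ)) ^ 2 - ((s:ℤ) * (t:ℤ)) ^ 2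
      = 4 * ((c:ℤ) ^ 2 - ((a:ℤ) + (b:ℤ)) * (c:ℤ) - 4) := by
    rw [mul_pow, mul_pow, ← hr', ← hs', ← ht']; ring
  have hmev : Even ((c:ℤ) * (r:ℤ) - (s:ℤ) * (t:ℤ)) := by
    have hmsq : ((c:ℤ) * (r:ℤ) - (s:ℤ) * (t:ℤ)) ^ 2
        = 2 * (((c:ℤ) * (r:ℤ)) * ((c:ℤ) * (r:ℤ) - (s:ℤ) * (t:ℤ))
          - 2 * ((c:ℤ) ^ 2 - ((a:ℤ) + (b:ℤ)) * (c:ℤ) - 4)) := by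
      linear_combination -id1
    have h2 : Even (((c:ℤ) * (r:ℤ) - (s:ℤ) * (t:ℤ)) ^ 2) :=
      ⟨(c:ℤ) * (r:ℤ) * ((c:ℤ) * (r:ℤ) - (s:ℤ) * (t:ℤ))
        - 2 * ((c:ℤ) ^ 2 - ((a:ℤ) + (b:ℤ)) * (c:ℤ) - 4), by linarith [hmsq]⟩
    exact (Int.even_pow.mp h2).1
  obtain ⟨n, hn⟩ := hmev
  have hst : (s:ℤ) * (t:ℤ) = (c:ℤ) * (r:ℤ) - 2 * n := by linarith [hn]
  have id2 : n * ((c:ℤ) * (r:ℤ) - n) = (c:ℤ) ^ 2 - ((a:ℤ) + (b:ℤ)) * (c:ℤ) - 4 := by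
    have id2' : 4 * (n * ((c:ℤ) * (r:ℤ) - n))
        = 4 * ((c:ℤ) ^ 2 - ((a:ℤ) + (b:ℤ)) * (c:ℤ) - 4) := by
      linear_combination id1 + ((s:ℤ) * (t:ℤ) + (c:ℤ) * (r:ℤ) - 2 * n) * hst
    linarith
  have hkey := d4_key (a:ℤ) b c r s t n hA1 hAB hBC hC5 hR3 hS1 hT1 hr' id2 hst
  have hprod : ((r:ℤ) * (s:ℤ) * (t:ℤ)) ^ 2
      = ((a:ℤ) * (b:ℤ) + 4) * ((a:ℤ) * (c:ℤ) + 4) * ((b:ℤ) * (c:ℤ) + 4) := by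
    rw [mul_pow, mul_pow, ← hr', ← hs', ← ht']
  have hlow := d4_low (a:ℤ) b c r s t hA1 hAB hBC (by linarith) hS1 hT1 hprod
  have hup := d4_up (a:ℤ) b c r s t hA1 hAB hBC hC5 hR3 hS1 hT1 hkey hprod
  have hd' : 2 * (d : ℤ) = 2 * ((a:ℤ) + (b:ℤ) + (c:ℤ)) + (a:ℤ) * (b:ℤ) * (c:ℤ)
      + (r:ℤ) * (s:ℤ) * (t:ℤ) := by exact_mod_cast hd
  constructor
  · have : (a : ℤ) * (b:ℤ) * (c:ℤ) + (c:ℤ) < (d:ℤ) := by linarith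
    exact_mod_cast this
  · have : (d : ℤ) < (a : ℤ) * (b:ℤ) * (c:ℤ) + 4 * (c:ℤ) := by linarith
    exact_mod_cast this
end

section
/- Let {a,b,c} be a D(4)-triple with a<b<c and let r=√(ab+4), s=√(ac+4), t=√(bc+4). Define d₊ = a+b+c+(abc+rst)/2. Then {a,b,c,d₊} is a D(4)-quadruple; in particular a·d₊+4, b·d₊+4, c·d₊+4 are perfect squares, with a·d₊+4 = ((at+rs)/2)², b·d₊+4 = ((bs+rt)/2)², and c·d₊+4 = ((cr+st)/2)². -/
/-- {a,b,c,d₊} is a D(4)-quadruple, with explicit square roots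
(at+rs)/2, (bs+rt)/2, (cr+st)/2 of ad₊+4, bd₊+4, cd₊+4. -/
theorem stmt2 (a b c d r s t : ℕ) (ha : 0 < a) (hab : a < b) (hbc : b < c)
    (hr : a * b + 4 = r ^ 2) (hs : a * c + 4 = s ^ 2) (ht : b * c + 4 = t ^ 2)
    (hrpos : 0 < r) (hspos : 0 < s) (htpos : 0 < t)
    (hd : 2 * d = 2 * (a + b + c) + a * b * c + r * s * t) :
    c < d ∧
    (∃ x : ℕ, a * d + 4 = x ^ 2) ∧ (∃ y : ℕ, b * d + 4 = y ^ 2) ∧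
    (∃ z : ℕ, c * d + 4 = z ^ 2) ∧
    4 * (a * d + 4) = (a * t + r * s) ^ 2 ∧
    4 * (b * d + 4) = (b * s + r * t) ^ 2 ∧
    4 * (c * d + 4) = (c * r + s * t) ^ 2 := by
  have hd' : (2:ℤ) * d = 2 * (a + b + c) + a * b * c + r * s * t := by exact_mod_cast hd
  have hr' : (a:ℤ) * b + 4 = r ^ 2 := by exact_mod_cast hr
  have hs' : (a:ℤ) * c + 4 = s ^ 2 := by exact_mod_cast hs
  have ht' : (b:ℤ) * c + 4 = t ^ 2 := by exact_mod_cast ht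
  have h1 : 4 * (a * d + 4) = (a * t + r * s) ^ 2 := by
    have : (4:ℤ) * (a * d + 4) = (a * t + r * s) ^ 2 := by
      linear_combination (2*(a:ℤ))*hd' + (a:ℤ)^2*ht' + (r:ℤ)^2*hs' + ((a:ℤ)*c+4)*hr'
    exact_mod_cast this
  have h2 : 4 * (b * d + 4) = (b * s + r * t) ^ 2 := by
    have : (4:ℤ) * (b * d + 4) = (b * s + r * t) ^ 2 := by
      linear_combination (2*(b:ℤ))*hd' + (b:ℤ)^2*hs' + (r:ℤ)^2*ht' + ((b:ℤ)*c+4)*hr'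
    exact_mod_cast this
  have h3 : 4 * (c * d + 4) = (c * r + s * t) ^ 2 := by
    have : (4:ℤ) * (c * d + 4) = (c * r + s * t) ^ 2 := by
      linear_combination (2*(c:ℤ))*hd' + (c:ℤ)^2*hr' + (s:ℤ)^2*ht' + ((b:ℤ)*c+4)*hs'
    exact_mod_cast this
  have sq : ∀ u v : ℕ, 4 * (u + 4) = v ^ 2 → ∃ x : ℕ, u + 4 = x ^ 2 := by
    intro u v h
    have hv : 2 ∣ v := by
      have : 2 ∣ v ^ 2 := ⟨2 * (u + 4), by omega⟩
      exact (Nat.Prime.dvd_of_dvd_pow Nat.prime_two this)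
    obtain ⟨x, rfl⟩ := hv
    exact ⟨x, by nlinarith⟩
  have hcd : c < d := by
    have h2d : 2 * (a + b + c) ≤ 2 * d := by rw [hd]; exact le_trans (Nat.le_add_right _ _) (Nat.le_add_right _ _)
    omega
  refine ⟨hcd, sq _ _ h1, sq _ _ h2, sq _ _ h3, h1, h2, h3⟩
end

section
/- A D(4)-triple {a,b,c} with a<b<c is regular (i.e., c = a+b+2r with r=√(ab+4)) if and only if d₋(a,b,c) := a+b+c+(abc−rst)/2 = 0, where s=√(ac+4), t=√(bc+4). -/
/-- A D(4)-triple a<b<c is regular (c = a+b+2r) iff d₋(a,b,c) = 0,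
i.e. 2(a+b+c)+abc = rst. -/
theorem stmt4 (a b c r s t : ℕ) (ha : 0 < a) (hab : a < b) (hbc : b < c)
    (hr : a * b + 4 = r ^ 2) (hs : a * c + 4 = s ^ 2) (ht : b * c + 4 = t ^ 2)
    (hrpos : 0 < r) (hspos : 0 < s) (htpos : 0 < t) :
    c = a + b + 2 * r ↔ 2 * (a + b + c) + a * b * c = r * s * t := by
  have hr' : (a:ℤ) * b + 4 = (r:ℤ)^2 := by exact_mod_cast hr
  have hs' : (a:ℤ) * c + 4 = (s:ℤ)^2 := by exact_mod_cast hs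
  have ht' : (b:ℤ) * c + 4 = (t:ℤ)^2 := by exact_mod_cast ht
  have ha' : (0:ℤ) < a := by exact_mod_cast ha
  have hab' : (a:ℤ) < b := by exact_mod_cast hab
  have hbc' : (b:ℤ) < c := by exact_mod_cast hbc
  have hrpos' : (0:ℤ) < r := by exact_mod_cast hrpos
  have hra : (a:ℤ) < r := by nlinarith [hr', hab', ha', hrpos']
  constructor
  · intro hc
    have hc' : (c:ℤ) = a + b + 2 * r := by exact_mod_cast hc
    have hsa : s = a + r := by
      have h1 : (s:ℤ)^2 = ((a:ℤ) + r)^2 := by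
        linear_combination hr' - hs' + (a:ℤ) * hc'
      have h2 : s ^ 2 = (a + r) ^ 2 := by exact_mod_cast h1
      exact Nat.pow_left_injective (by norm_num) h2
    have hta : t = b + r := by
      have h1 : (t:ℤ)^2 = ((b:ℤ) + r)^2 := by
        linear_combination hr' - ht' + (b:ℤ) * hc'
      have h2 : t ^ 2 = (b + r) ^ 2 := by exact_mod_cast h1
      exact Nat.pow_left_injective (by norm_num) h2
    subst hsa hta
    have : (2 * ((a:ℤ) + b + c) + a * b * c : ℤ) = r * (a + r) * (b + r) := by
      linear_combination ((a:ℤ) + b + r) * hr' + (2 + (a:ℤ) * b) * hc'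
    exact_mod_cast this
  · intro h
    have h' : (2 * ((a:ℤ) + b + c) + a * b * c : ℤ) = r * s * t := by exact_mod_cast h
    have h2' : (2 * ((a:ℤ) + b + c) + a * b * c)^2 =
        ((a:ℤ) * b + 4) * ((a:ℤ) * c + 4) * ((b:ℤ) * c + 4) := by
      rw [hr', hs', ht']
      linear_combination (2 * ((a:ℤ) + b + c) + a * b * c + (r:ℤ) * s * t) * h'
    have hsq4 : 4 * ((c:ℤ) - a - b)^2 = 4 * (4 * (r:ℤ)^2) := by
      linear_combination h2' + 16 * hr'
    have hsq : ((c:ℤ) - a - b)^2 = 4 * (r:ℤ)^2 := by linarith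
    have key : ((c:ℤ) - a - b - 2 * r) * ((c:ℤ) - a - b + 2 * r) = 0 := by
      linear_combination hsq
    rcases mul_eq_zero.mp key with h0 | h0
    · have : (c:ℤ) = a + b + 2 * r := by linarith
      exact_mod_cast this
    · exfalso; linarith
end

section
/- Let {a,b,c} be a non-regular D(4)-triple with a<b<c (i.e. c ≠ a+b+2√(ab+4)). Then c = d₊(a,b,d₋(a,b,c)), and {a,b,d₋(a,b,c),c} is a regular D(4)-quadruple. In particular d₋(a,b,c) > 0. -/
set_option maxHeartbeats 1000000

private lemma no_small_D4 (a b r : ℤ) (ha : 0 < a) (hab : a < b) (hb3 : b ≤ 3)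
    (hr : a * b + 4 = r ^ 2) (hrpos : 0 < r) : False := by
  have ha2 : a ≤ 2 := by omega
  interval_cases a <;> interval_cases b <;>
    (have hr3 : r ≤ 3 := by nlinarith) <;> interval_cases r <;> norm_num at hr

/-- For a non-regular D(4)-triple a<b<c, with e = d₋(a,b,c):
e > 0, e < c, e ∉ {a,b}, ae+4 and be+4 are perfect squares, and
c = d₊(a,b,e); i.e. {a,b,e,c} is a regular D(4)-quadruple. -/
theorem stmt6 (a b c r s t e : ℤ)
    (ha : 0 < a) (hab : a < b) (hbc : b < c)
    (hr : a * b + 4 = r ^ 2) (hs : a * c + 4 = s ^ 2) (ht : b * c + 4 = t ^ 2)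
    (hrpos : 0 < r) (hspos : 0 < s) (htpos : 0 < t)
    (hnr : c ≠ a + b + 2 * r)
    (he : 2 * e = 2 * (a + b + c) + a * b * c - r * s * t) :
    0 < e ∧ e < c ∧ e ≠ a ∧ e ≠ b ∧
    ∃ u v : ℤ, 0 < u ∧ 0 < v ∧ a * e + 4 = u ^ 2 ∧ b * e + 4 = v ^ 2 ∧
      2 * c = 2 * (a + b + e) + a * b * e + r * u * v := by
  have four_ne : (4:ℤ) ≠ 0 := by norm_num
  have hb0 : (0:ℤ) < b := lt_trans ha hab
  have hc0 : (0:ℤ) < c := lt_trans hb0 hbc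
  -- key square identities
  have hu4 : (r*s - a*t)^2 = 4*(a*e+4) := by
    linear_combination (-s^2)*hr + (-(a*b+4))*hs + (-a^2)*ht - 2*a*he
  have hv4 : (r*t - b*s)^2 = 4*(b*e+4) := by
    linear_combination (-t^2)*hr + (-b^2)*hs + (-(a*b+4))*ht - 2*b*he
  have hw4 : (s*t - c*r)^2 = 4*(c*e+4) := by
    linear_combination (-c^2)*hr + (-t^2)*hs + (-(a*c+4))*ht - 2*c*he
  -- evenness
  obtain ⟨u, hu2⟩ : ∃ u : ℤ, r*s - a*t = 2*u :=
    Int.prime_two.dvd_of_dvd_pow (n := 2)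
      (dvd_trans (by norm_num : (2:ℤ) ∣ 4) ⟨a*e+4, hu4⟩)
  obtain ⟨v, hv2⟩ : ∃ v : ℤ, r*t - b*s = 2*v :=
    Int.prime_two.dvd_of_dvd_pow (n := 2)
      (dvd_trans (by norm_num : (2:ℤ) ∣ 4) ⟨b*e+4, hv4⟩)
  have hue : a*e + 4 = u^2 := by
    refine mul_left_cancel₀ four_ne ?_
    linear_combination (-1)*hu4 + (r*s - a*t + 2*u)*hu2
  have hve : b*e + 4 = v^2 := by
    refine mul_left_cancel₀ four_ne ?_
    linear_combination (-1)*hv4 + (r*t - b*s + 2*v)*hv2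
  -- positivity of u and v
  have hdu : (r*s)^2 - (a*t)^2 = 4*(a*b + a*c + 4 - a*a) := by
    linear_combination (-s^2)*hr - (a*b+4)*hs + a^2*ht
  have hupos : 0 < u := by
    have h1 : (a*t)^2 < (r*s)^2 := by
      linarith [hdu, mul_pos ha (show (0:ℤ) < b - a by omega), mul_pos ha hc0]
    have h2 : a*t < r*s := by
      by_contra hcon
      push_neg at hcon
      have := pow_le_pow_left₀ (by positivity : (0:ℤ) ≤ r*s) hcon 2
      linarith
    omega
  have hdv : (r*t)^2 - (b*s)^2 = 4*(a*b + b*c + 4 - b*b) := by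
    linear_combination (-t^2)*hr + b^2*hs - (a*b+4)*ht
  have hvpos : 0 < v := by
    have h1 : (b*s)^2 < (r*t)^2 := by
      linarith [hdv, mul_pos hb0 (show (0:ℤ) < c - b by omega), mul_pos ha hb0]
    have h2 : b*s < r*t := by
      by_contra hcon
      push_neg at hcon
      have := pow_le_pow_left₀ (by positivity : (0:ℤ) ≤ r*t) hcon 2
      linarith
    omega
  -- e ≥ 0
  have hege0 : 0 ≤ e := by
    by_contra hneg
    push_neg at hneg
    have hce : 0 ≤ c*e + 4 := by linarith [hw4, sq_nonneg (s*t - c*r)]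
    have hmul : c*(e+1) ≤ 0 :=
      mul_nonpos_of_nonneg_of_nonpos (by omega) (by omega)
    have hc4 : c ≤ 4 := by linarith
    exact no_small_D4 a b r ha hab (by omega) hr hrpos
  -- e ≠ 0
  have hene0 : e ≠ 0 := by
    intro h0
    have heq : r*s*t = 2*(a+b+c) + a*b*c := by omega
    have hsq : (2*c-2*a-2*b)^2 = (4*r)^2 := by
      linear_combination (16 - s^2*t^2)*hr - (a*b+4)*t^2*hs - (a*b+4)*(a*c+4)*ht
        - (2*(a+b+c)+a*b*c + r*s*t)*heq
    have hfac : (2*c-2*a-2*b-4*r)*(2*c-2*a-2*b+4*r) = 0 := by linear_combination hsq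
    rcases mul_eq_zero.mp hfac with h | h
    · exact hnr (by omega)
    · -- c = a + b - 2r, impossible
      have h4r : 4*r ≤ 2*a - 2 := by omega
      have hsq2 : (4*r)^2 ≤ (2*a-2)^2 := pow_le_pow_left₀ (by positivity) h4r 2
      have hba : a*a ≤ a*b := mul_le_mul_of_nonneg_left hab.le ha.le
      have h1a : 1*1 ≤ a*a := mul_le_mul (by omega) (by omega) (by omega) (by omega)
      linarith [hr]
  have hepos : 0 < e := lt_of_le_of_ne hege0 (Ne.symm hene0)
  -- e < c
  have heltc : e < c := by
    have hd2 : (r*s*t)^2 - (a*b*c+2*a+2*b)^2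
        = 4*(a*b*c^2 + 2*a*b + 4*a*c + 4*b*c - a^2 - b^2 + 16) := by
      linear_combination (-s^2*t^2)*hr - (a*b+4)*t^2*hs - (a*b+4)*(a*c+4)*ht
    have hab2 : (2:ℤ) ≤ a*b := by
      calc (2:ℤ) ≤ b := by omega
      _ = 1*b := (one_mul b).symm
      _ ≤ a*b := mul_le_mul_of_nonneg_right (by omega) hb0.le
    have h3 : 2*c^2 ≤ a*b*c^2 := mul_le_mul_of_nonneg_right hab2 (sq_nonneg c)
    have ha2 : a^2 < c^2 := by
      have := pow_lt_pow_left₀ (show a < c by omega) ha.le two_ne_zero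
      simpa using this
    have hb2 : b^2 < c^2 := by
      have := pow_lt_pow_left₀ hbc hb0.le two_ne_zero
      simpa using this
    have h1 : (a*b*c+2*a+2*b)^2 < (r*s*t)^2 := by
      linarith [hd2, h3, ha2, hb2, mul_pos ha hc0, mul_pos hb0 hc0]
    have h2 : a*b*c + 2*a + 2*b < r*s*t := by
      by_contra hcon
      push_neg at hcon
      have := pow_le_pow_left₀ (by positivity : (0:ℤ) ≤ r*s*t) hcon 2
      linarith
    omega
  -- e ≠ a
  have hea : e ≠ a := by
    intro h0
    subst h0
    have hq1 : u^2 < (e+2)^2 := by nlinarith [hue, hepos]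
    have hq2 : e^2 < u^2 := by nlinarith [hue, hepos]
    have hul : u ≤ e + 1 := by
      by_contra hcon
      push_neg at hcon
      have := pow_le_pow_left₀ (by omega : (0:ℤ) ≤ e + 2) (by omega : e + 2 ≤ u) 2
      linarith
    have hug : e + 1 ≤ u := by
      by_contra hcon
      push_neg at hcon
      have := pow_le_pow_left₀ hupos.le (by omega : u ≤ e) 2
      linarith
    have hu' : u = e + 1 := le_antisymm hul hug
    subst hu'
    have : 2*e = 3 := by nlinarith [hue]
    omega
  -- e ≠ b
  have heb : e ≠ b := by
    intro h0
    subst h0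
    have hq1 : v^2 < (e+2)^2 := by nlinarith [hve, hepos]
    have hq2 : e^2 < v^2 := by nlinarith [hve, hepos]
    have hvl : v ≤ e + 1 := by
      by_contra hcon
      push_neg at hcon
      have := pow_le_pow_left₀ (by omega : (0:ℤ) ≤ e + 2) (by omega : e + 2 ≤ v) 2
      linarith
    have hvg : e + 1 ≤ v := by
      by_contra hcon
      push_neg at hcon
      have := pow_le_pow_left₀ hvpos.le (by omega : v ≤ e) 2
      linarith
    have hv' : v = e + 1 := le_antisymm hvl hvg
    subst hv'
    have : 2*e = 3 := by nlinarith [hve]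
    omega
  refine ⟨hepos, heltc, hea, heb, u, v, hupos, hvpos, hue, hve, ?_⟩
  refine mul_left_cancel₀ four_ne ?_
  linear_combination (r*s*t - b*s^2 - a*t^2)*hr - b*(a*b+4)*hs - a*(a*b+4)*ht
    - (2*a*b+4)*he + (r*(r*t-b*s))*hu2 + (2*r*u)*hv2
end

section
/- For any D(4)-triple {a,b,c} there exists a minimal nonnegative integer D with D < log(abc)/log 5 such that d₋(D+1)(a,b,c) = 0, where the operator ∂ sends a non-regular D(4)-triple {a,b,c} (a<b<c) to the triple {a,b,d₋(a,b,c)} and fixes regular triples, and d₋(D+1) denotes applying ∂ D times and then taking d₋. -/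
/-- d₋ of a triple (for D(4)-triples, the product under `Nat.sqrt` is a
perfect square, so this computes a+b+c+(abc−rst)/2). -/
def dminus4 (a b c : ℕ) : ℕ :=
  (2 * (a + b + c) + a * b * c - Nat.sqrt ((a * b + 4) * (a * c + 4) * (b * c + 4))) / 2

/-- Insert `e` into the ordered pair (a,b) to get an ordered triple. -/
def sortTriple (e a b : ℕ) : ℕ × ℕ × ℕ :=
  if e < a then (e, a, b) else if e < b then (a, e, b) else (a, b, e)

/-- The operator ∂: sends a non-regular (d₋ ≠ 0) ordered triple (a,b,c) to the
ordered triple on {a,b,d₋(a,b,c)}, and fixes regular triples. -/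
def partialD4 (p : ℕ × ℕ × ℕ) : ℕ × ℕ × ℕ :=
  if dminus4 p.1 p.2.1 p.2.2 = 0 then p else sortTriple (dminus4 p.1 p.2.1 p.2.2) p.1 p.2.1


lemma parity4 (a b c r s t : ℕ) (hr : a*b+4 = r^2) (hs : a*c+4 = s^2) (ht : b*c+4 = t^2) :
    (2:ℤ) ∣ ((a:ℤ)*b*c - (r:ℤ)*s*t) := by
  have key : ∀ x : ZMod 2, x^2 = x := by decide
  have h4 : (4 : ZMod 2) = 0 := by decide
  have hr2 : (r : ZMod 2) = (a : ZMod 2) * b := by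
    have h := congrArg (Nat.cast : ℕ → ZMod 2) hr
    push_cast at h
    rw [← key r, ← h, h4, add_zero]
  have hs2 : (s : ZMod 2) = (a : ZMod 2) * c := by
    have h := congrArg (Nat.cast : ℕ → ZMod 2) hs
    push_cast at h
    rw [← key s, ← h, h4, add_zero]
  have ht2 : (t : ZMod 2) = (b : ZMod 2) * c := by
    have h := congrArg (Nat.cast : ℕ → ZMod 2) ht
    push_cast at h
    rw [← key t, ← h, h4, add_zero]
  have h0 : (((a:ℤ)*b*c - (r:ℤ)*s*t : ℤ) : ZMod 2) = 0 := by
    push_cast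
    rw [hr2, hs2, ht2]
    linear_combination -(key ((a:ZMod 2)*(b:ZMod 2)*(c:ZMod 2)))
  exact (ZMod.intCast_zmod_eq_zero_iff_dvd _ 2).mp h0

lemma c_ge_five (a b c s t : ℕ) (ha : 0 < a) (hab : a < b) (hbc : b < c)
    (hs : a*c+4 = s^2) (ht : b*c+4 = t^2) : 5 ≤ c := by
  by_contra h
  push_neg at h
  have hc4 : c ≤ 4 := by omega
  have hb3 : b ≤ 3 := by omega
  have ha2 : a ≤ 2 := by omega
  have hs' : s ≤ 4 := by nlinarith
  have ht' : t ≤ 4 := by nlinarith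
  have hs2 : a*c+4 = s*s := by rw [hs]; ring
  have ht2 : b*c+4 = t*t := by rw [ht]; ring
  interval_cases a <;> interval_cases b <;> interval_cases c <;> interval_cases s <;> interval_cases t <;> omega

lemma ab_ge_five (a b r : ℕ) (ha : 0 < a) (hab : a < b) (hr : a*b+4 = r^2) : 5 ≤ a*b := by
  have h2 : 2 ≤ a*b := by nlinarith
  have h3 : 3 ≤ r := by nlinarith
  nlinarith

lemma no_self_sq (a x : ℕ) (ha : 0 < a) (h : a*a+4 = x^2) : False := by
  have h' : (a:ℤ)*a+4 = (x:ℤ)^2 := by exact_mod_cast h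
  have hax : (a:ℤ) < x := by nlinarith
  have hax2 : (x:ℤ) < a+2 := by nlinarith
  have hx : (x:ℤ) = a+1 := by omega
  rw [hx] at h'
  ring_nf at h'
  omega

lemma E_nonneg (A B C R S T : ℤ) (hC5 : 5 ≤ C)
    (hpar : 2 ∣ (2*(A+B+C)+A*B*C - R*S*T))
    (hR : R^2 = A*B+4) (hS : S^2 = A*C+4) (hT : T^2 = B*C+4) :
    0 ≤ 2*(A+B+C)+A*B*C - R*S*T := by
  set E : ℤ := 2*(A+B+C)+A*B*C - R*S*T with hEdef
  have hCid : (S*T - C*R)^2 = 2*C*E+16 := by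
    rw [hEdef]; linear_combination T^2*hS + (A*C+4)*hT + C^2*hR
  by_contra hneg
  push_neg at hneg
  obtain ⟨k, hk⟩ := hpar
  have hE2 : E ≤ -2 := by omega
  have h5 : (C-5)*E ≤ 0 := mul_nonpos_iff.mpr (Or.inl ⟨by linarith, by linarith⟩)
  have h6 : (C-5)*E = C*E - 5*E := by ring
  linarith [sq_nonneg (S*T - C*R), hCid]

lemma main_int (A B C R S T D : ℤ) (hA : 0 < A) (hAB : A < B) (hBC : B < C)
    (hab5 : 5 ≤ A*B) (hR0 : 0 ≤ R) (hS0 : 0 ≤ S) (hT0 : 0 ≤ T)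
    (hR : R^2 = A*B+4) (hS : S^2 = A*C+4) (hT : T^2 = B*C+4)
    (hD : 2*D = 2*(A+B+C)+A*B*C - R*S*T) (hDpos : 1 ≤ D) :
    ∃ x y : ℤ, 0 < x ∧ 0 < y ∧ x^2 = A*D+4 ∧ y^2 = B*D+4 ∧ A*B*D < C := by
  have hB : 0 < B := lt_trans hA hAB
  have hC : 0 < C := lt_trans hB hBC
  have hD0 : (0:ℤ) < D := hDpos
  have hRpos : 0 < R := lt_of_le_of_ne hR0 (by
    intro h; rw [← h] at hR; simp at hR; linarith)
  have hSpos : 0 < S := lt_of_le_of_ne hS0 (by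
    intro h; rw [← h] at hS; simp at hS; nlinarith [mul_pos hA hC])
  have hTpos : 0 < T := lt_of_le_of_ne hT0 (by
    intro h; rw [← h] at hT; simp at hT; nlinarith [mul_pos hB hC])
  set X : ℤ := R*S - A*T with hXdef
  set Y : ℤ := R*T - B*S with hYdef
  have hXE : X^2 = 2*A*(2*(A+B+C)+A*B*C-R*S*T)+16 := by
    rw [hXdef]; linear_combination S^2*hR + (A*B+4)*hS + A^2*hT
  have hYE : Y^2 = 2*B*(2*(A+B+C)+A*B*C-R*S*T)+16 := by
    rw [hYdef]; linear_combination T^2*hR + (A*B+4)*hT + B^2*hS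
  have hX4 : X^2 = 4*(A*D+4) := by rw [hXE, ← hD]; ring
  have hY4 : Y^2 = 4*(B*D+4) := by rw [hYE, ← hD]; ring
  have hKeyE : R*(X*Y) = 8*C - 8*(A+B) - (4+2*A*B)*(2*(A+B+C)+A*B*C-R*S*T) := by
    rw [hXdef, hYdef]
    linear_combination (R*S*T - B*S^2 - A*T^2)*hR + (-(B*(A*B+4)))*hS + (-(A*(A*B+4)))*hT
  have hKey : R*(X*Y) = 8*C - 8*(A+B) - (4+2*A*B)*(2*D) := by rw [hKeyE, ← hD]
  have hXpos : 0 < X := by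
    have h1 : X * (R*S + A*T) = 4*(A*(B-A) + A*C + 4) := by
      rw [hXdef]; linear_combination S^2*hR + (A*B+4)*hS - A^2*hT
    have h2 : 0 < R*S + A*T := by positivity
    have h3 : 0 < X*(R*S+A*T) := by
      rw [h1]
      have := mul_pos hA (sub_pos.mpr hAB)
      have := mul_pos hA hC
      linarith
    by_contra hXn
    push_neg at hXn
    have h4 : X*(R*S+A*T) ≤ 0 := mul_nonpos_iff.mpr (Or.inr ⟨hXn, h2.le⟩)
    linarith
  have hYpos : 0 < Y := by
    have h1 : Y * (R*T + B*S) = 4*(A*B + B*(C-B) + 4) := by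
      rw [hYdef]; linear_combination T^2*hR + (A*B+4)*hT - B^2*hS
    have h2 : 0 < R*T + B*S := by positivity
    have h3 : 0 < Y*(R*T+B*S) := by
      rw [h1]
      have := mul_pos hA hB
      have := mul_pos hB (sub_pos.mpr hBC)
      linarith
    by_contra hYn
    push_neg at hYn
    have h4 : Y*(R*T+B*S) ≤ 0 := mul_nonpos_iff.mpr (Or.inr ⟨hYn, h2.le⟩)
    linarith
  have hXeven : Even X := by
    have h : Even (X^2) := ⟨2*(A*D+4), by rw [hX4]; ring⟩
    exact (Int.even_pow.mp h).1
  have hYeven : Even Y := by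
    have h : Even (Y^2) := ⟨2*(B*D+4), by rw [hY4]; ring⟩
    exact (Int.even_pow.mp h).1
  obtain ⟨x, hx⟩ := hXeven
  obtain ⟨y, hy⟩ := hYeven
  have hx4 : 4*x^2 = 4*(A*D+4) := by rw [← hX4, hx]; ring
  have hy4 : 4*y^2 = 4*(B*D+4) := by rw [← hY4, hy]; ring
  have hxsq : x^2 = A*D+4 := by linarith
  have hysq : y^2 = B*D+4 := by linarith
  have hxpos : 0 < x := by
    have hX2x : X = 2*x := by rw [hx]; ring
    linarith [hXpos, hX2x]
  have hypos : 0 < y := by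
    have hY2y : Y = 2*y := by rw [hy]; ring
    linarith [hYpos, hY2y]
  refine ⟨x, y, hxpos, hypos, hxsq, hysq, ?_⟩
  have hRXY : 4*(A*B)*D < R*(X*Y) := by
    have h0 : 0 ≤ R*(X*Y) := by positivity
    have h1 : 0 ≤ 4*(A*B)*D := by positivity
    have hsq : (4*(A*B)*D)^2 < (R*(X*Y))^2 := by
      have h2 : (R*(X*Y))^2 = (A*B+4)*(4*(A*D+4))*(4*(B*D+4)) := by
        rw [mul_pow, mul_pow, ← hX4, ← hY4, hR]; ring
      have h3 : (A*B+4)*(4*(A*D+4))*(4*(B*D+4)) - (4*(A*B)*D)^2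
          = 16*(4*(A*A*B*D) + 4*(A*B*B*D) + 4*(A*B*D*D) + 16*(A*B) + 16*(A*D) + 16*(B*D) + 64) := by
        ring
      have h4 : 0 < 4*(A*A*B*D) + 4*(A*B*B*D) + 4*(A*B*D*D) + 16*(A*B) + 16*(A*D) + 16*(B*D) + 64 := by
        positivity
      linarith
    exact lt_of_pow_lt_pow_left₀ 2 h0 hsq
  linarith [hKey, hRXY, mul_pos (mul_pos hA hB) hD0]

/-- The key step lemma on naturals. -/
lemma core (a b c : ℕ) (ha : 0 < a) (hab : a < b) (hbc : b < c)
    (r s t : ℕ) (hr : a*b+4 = r^2) (hs : a*c+4 = s^2) (ht : b*c+4 = t^2) :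
    dminus4 a b c = 0 ∨
    (0 < dminus4 a b c ∧ dminus4 a b c ≠ a ∧ dminus4 a b c ≠ b ∧
     5 * (a*b*dminus4 a b c) < a*b*c ∧
     (∃ x, a * dminus4 a b c + 4 = x^2) ∧ (∃ y, b * dminus4 a b c + 4 = y^2)) := by
  have hsqrt : Nat.sqrt ((a*b+4)*(a*c+4)*(b*c+4)) = r*s*t := by
    have hprod : (a*b+4)*(a*c+4)*(b*c+4) = (r*s*t)*(r*s*t) := by rw [hr, hs, ht]; ring
    rw [hprod, Nat.sqrt_eq]
  have hR : (r:ℤ)^2 = (a:ℤ)*b+4 := by exact_mod_cast hr.symm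
  have hS : (s:ℤ)^2 = (a:ℤ)*c+4 := by exact_mod_cast hs.symm
  have hT : (t:ℤ)^2 = (b:ℤ)*c+4 := by exact_mod_cast ht.symm
  have hC5 : (5:ℤ) ≤ (c:ℤ) := by exact_mod_cast c_ge_five a b c s t ha hab hbc hs ht
  have hpar : (2:ℤ) ∣ (2*((a:ℤ)+b+c)+(a:ℤ)*b*c - (r:ℤ)*s*t) := by
    obtain ⟨k, hk⟩ := parity4 a b c r s t hr hs ht
    exact ⟨((a:ℤ)+b+c) + k, by linarith⟩
  have hE0 : 0 ≤ 2*((a:ℤ)+b+c)+(a:ℤ)*b*c - (r:ℤ)*s*t :=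
    E_nonneg (a:ℤ) (b:ℤ) (c:ℤ) (r:ℤ) (s:ℤ) (t:ℤ) hC5 hpar hR hS hT
  have hleN : r*s*t ≤ 2*(a+b+c)+a*b*c := by
    have : (r:ℤ)*s*t ≤ 2*((a:ℤ)+b+c)+(a:ℤ)*b*c := by linarith
    exact_mod_cast this
  have hmE : ((2*(a+b+c)+a*b*c - r*s*t : ℕ) : ℤ)
      = 2*((a:ℤ)+b+c)+(a:ℤ)*b*c - (r:ℤ)*s*t := by
    push_cast [hleN]; ring
  have hm2 : 2 ∣ (2*(a+b+c)+a*b*c - r*s*t) := by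
    have h2 : (2:ℤ) ∣ ((2*(a+b+c)+a*b*c - r*s*t : ℕ) : ℤ) := by rw [hmE]; exact hpar
    exact_mod_cast h2
  have hdval : dminus4 a b c = (2*(a+b+c)+a*b*c - r*s*t) / 2 := by
    unfold dminus4; rw [hsqrt]
  set d := dminus4 a b c with hddef
  have hd2 : 2*(d:ℤ) = 2*((a:ℤ)+b+c)+(a:ℤ)*b*c - (r:ℤ)*s*t := by
    have h1 : 2*d = 2*(a+b+c)+a*b*c - r*s*t := by
      rw [hdval, Nat.mul_div_cancel' hm2]
    rw [← hmE, ← h1]; push_cast; ring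
  rcases Nat.eq_zero_or_pos d with hd0 | hdpos
  · exact Or.inl hd0
  · right
    have hab5 : 5 ≤ a*b := ab_ge_five a b r ha hab hr
    obtain ⟨x, y, hxpos, hypos, hxsq, hysq, hbig⟩ :=
      main_int (a:ℤ) (b:ℤ) (c:ℤ) (r:ℤ) (s:ℤ) (t:ℤ) (d:ℤ)
        (by exact_mod_cast ha) (by exact_mod_cast hab) (by exact_mod_cast hbc)
        (by exact_mod_cast hab5) (by positivity) (by positivity) (by positivity)
        hR hS hT hd2 (by exact_mod_cast hdpos)
    have hxN : a * d + 4 = x.toNat^2 := by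
      have h1 : (x.toNat : ℤ) = x := Int.toNat_of_nonneg hxpos.le
      have h2 : ((x.toNat)^2 : ℤ) = (a:ℤ)*d+4 := by rw [h1]; exact hxsq
      exact_mod_cast h2.symm
    have hyN : b * d + 4 = y.toNat^2 := by
      have h1 : (y.toNat : ℤ) = y := Int.toNat_of_nonneg hypos.le
      have h2 : ((y.toNat)^2 : ℤ) = (b:ℤ)*d+4 := by rw [h1]; exact hysq
      exact_mod_cast h2.symm
    have hbigN : a*b*d < c := by exact_mod_cast hbig
    refine ⟨hdpos, ?_, ?_, ?_, ⟨x.toNat, hxN⟩, ⟨y.toNat, hyN⟩⟩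
    · intro hda
      exact no_self_sq a x.toNat ha (by rw [← hxN, hda])
    · intro hdb
      exact no_self_sq b y.toNat (lt_trans ha hab) (by rw [← hyN, hdb])
    · calc 5 * (a*b*d) ≤ (a*b) * (a*b*d) := Nat.mul_le_mul_right _ hab5
        _ < (a*b) * c := (Nat.mul_lt_mul_left (by positivity)).mpr hbigN
        _ = a*b*c := rfl

lemma recursion : ∀ n a b c : ℕ, a*b*c ≤ n → 0 < a → a < b → b < c →
    (∃ r, a*b+4 = r^2) → (∃ s, a*c+4 = s^2) → (∃ t, b*c+4 = t^2) →
    ∃ D : ℕ, 5^D < a*b*c ∧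
      dminus4 (partialD4^[D] (a,b,c)).1 (partialD4^[D] (a,b,c)).2.1
        (partialD4^[D] (a,b,c)).2.2 = 0 ∧
      ∀ D' < D, dminus4 (partialD4^[D'] (a,b,c)).1 (partialD4^[D'] (a,b,c)).2.1
        (partialD4^[D'] (a,b,c)).2.2 ≠ 0 := by
  intro n
  induction n with
  | zero =>
    intro a b c hle ha hab hbc _ _ _
    have h1 : 0 < a*b*c := Nat.mul_pos (Nat.mul_pos ha (ha.trans hab)) ((ha.trans hab).trans hbc)
    omega
  | succ n ih =>
    intro a b c hle ha hab hbc hr' hs' ht'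
    obtain ⟨r, hr⟩ := hr'
    obtain ⟨s, hs⟩ := hs'
    obtain ⟨t, ht⟩ := ht'
    have habc6 : 6 ≤ a*b*c := by
      have hb2 : 2 ≤ b := by omega
      have hc3 : 3 ≤ c := by omega
      calc 6 = 1*2*3 := rfl
        _ ≤ a*b*c := Nat.mul_le_mul (Nat.mul_le_mul ha hb2) hc3
    rcases core a b c ha hab hbc r s t hr hs ht with h0 | ⟨hdpos, hda, hdb, h5, ⟨x, hx⟩, ⟨y, hy⟩⟩
    · exact ⟨0, by omega, by simpa using h0, by omega⟩
    · set d := dminus4 a b c with hddef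
      have hstep : partialD4 (a,b,c) = sortTriple d a b := by
        unfold partialD4
        simp only []
        rw [if_neg]
        exact hdpos.ne'
      have hsorted : ∃ p q u : ℕ, sortTriple d a b = (p,q,u) ∧ 0 < p ∧ p < q ∧ q < u ∧
          p*q*u = a*b*d ∧ (∃ r1, p*q+4 = r1^2) ∧ (∃ s1, p*u+4 = s1^2) ∧ (∃ t1, q*u+4 = t1^2) := by
        unfold sortTriple
        split_ifs with h1 h2
        · exact ⟨d, a, b, rfl, hdpos, h1, hab, by ring,
            ⟨x, by rw [mul_comm]; exact hx⟩, ⟨y, by rw [mul_comm]; exact hy⟩, ⟨r, hr⟩⟩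
        · have had : a < d := by omega
          exact ⟨a, d, b, rfl, ha, had, h2, by ring, ⟨x, hx⟩, ⟨r, hr⟩,
            ⟨y, by rw [mul_comm]; exact hy⟩⟩
        · have hbd : b < d := by omega
          exact ⟨a, b, d, rfl, ha, hab, hbd, rfl, ⟨r, hr⟩, ⟨x, hx⟩, ⟨y, hy⟩⟩
      obtain ⟨p, q, u, hsort, hp, hpq, hqu, hprod, hr1, hs1, ht1⟩ := hsorted
      have hlen : p*q*u ≤ n := by omega
      obtain ⟨D, hD5, hDz, hDmin⟩ := ih p q u hlen hp hpq hqu hr1 hs1 ht1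
      refine ⟨D+1, ?_, ?_, ?_⟩
      · have : 5^(D+1) = 5*5^D := by ring
        rw [this]
        have h1 : 5*5^D < 5*(p*q*u) := by omega
        omega
      · rw [Function.iterate_succ_apply, hstep, hsort]
        exact hDz
      · intro D' hD'
        match D' with
        | 0 => simpa using hdpos.ne'
        | (k+1) =>
          rw [Function.iterate_succ_apply, hstep, hsort]
          exact hDmin k (by omega)


/-- For any D(4)-triple there is a minimal D < log(abc)/log 5 with
d₋(D+1)(a,b,c) = 0, where d₋(D+1) means applying ∂ D times and then taking d₋. -/
theorem stmt7 (a b c : ℕ) (ha : 0 < a) (hab : a < b) (hbc : b < c)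
    (hr : ∃ r : ℕ, a * b + 4 = r ^ 2) (hs : ∃ s : ℕ, a * c + 4 = s ^ 2)
    (ht : ∃ t : ℕ, b * c + 4 = t ^ 2) :
    ∃ D : ℕ, (D : ℝ) < Real.log (a * b * c) / Real.log 5 ∧
      dminus4 (partialD4^[D] (a, b, c)).1 (partialD4^[D] (a, b, c)).2.1
        (partialD4^[D] (a, b, c)).2.2 = 0 ∧
      ∀ D' < D, dminus4 (partialD4^[D'] (a, b, c)).1 (partialD4^[D'] (a, b, c)).2.1
        (partialD4^[D'] (a, b, c)).2.2 ≠ 0 := by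
  obtain ⟨D, h5, hz, hmin⟩ := recursion (a*b*c) a b c le_rfl ha hab hbc hr hs ht
  refine ⟨D, ?_, hz, hmin⟩
  have h5R : (5:ℝ)^D < (a:ℝ)*b*c := by exact_mod_cast h5
  have hpos : (0:ℝ) < (5:ℝ)^D := by positivity
  have hlog : Real.log ((5:ℝ)^D) < Real.log ((a:ℝ)*b*c) := Real.log_lt_log hpos h5R
  rw [Real.log_pow] at hlog
  rw [lt_div_iff₀ (Real.log_pos (by norm_num))]
  exact hlog
end

section
/- Let a, b, d be positive integers with ab+4=r², ad+4=x², bd+4=y² for positive integers r,x,y, and define the sequence Y₀=2, Y₁=(r·2+b·2)/2=r+b, Y_{h+2}=r·Y_{h+1}−Y_h. Then for all h ≥ 0, Y_h ≡ 2 (mod b) when h is even and Y_h ≡ Y₁ (mod b) when h is odd. Similarly, if W₀=2ε (ε=±1), W₁=(x·2ε+d·2)/2, W_{l+2}=x·W_{l+1}−W_l, then W_{2l} ≡ 2ε + d(aεl² + xl) (mod d²) for all l ≥ 0. -/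
/-- Congruences for the standard recurrence sequences: Y_h ≡ 2 (mod b) for even h,
Y_h ≡ Y₁ (mod b) for odd h; and W_{2l} ≡ 2ε + d(aεl² + xl) (mod d²). -/
theorem stmt9 (a b d r x y ε : ℤ) (Y W : ℕ → ℤ)
    (ha : 0 < a) (hb : 0 < b) (hd : 0 < d)
    (hr : a * b + 4 = r ^ 2) (hx : a * d + 4 = x ^ 2) (hy : b * d + 4 = y ^ 2)
    (hrpos : 0 < r) (hxpos : 0 < x) (hypos : 0 < y)
    (hε : ε = 1 ∨ ε = -1)
    (hY0 : Y 0 = 2) (hY1 : Y 1 = r + b)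
    (hYrec : ∀ h : ℕ, Y (h + 2) = r * Y (h + 1) - Y h)
    (hW0 : W 0 = 2 * ε) (hW1 : W 1 = ε * x + d)
    (hWrec : ∀ l : ℕ, W (l + 2) = x * W (l + 1) - W l) :
    (∀ h : ℕ, (Even h → Y h ≡ 2 [ZMOD b]) ∧ (Odd h → Y h ≡ Y 1 [ZMOD b])) ∧
    (∀ l : ℕ, W (2 * l) ≡ 2 * ε + d * (a * ε * (l : ℤ) ^ 2 + x * (l : ℤ)) [ZMOD d ^ 2]) := by
  constructor
  · -- Part 1
    have key : ∀ k : ℕ, b ∣ Y (2 * k) - 2 ∧ b ∣ Y (2 * k + 1) - (r + b) := by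
      intro k
      induction k with
      | zero => simp [hY0, hY1]
      | succ n ih =>
        obtain ⟨h1, h2⟩ := ih
        have e1 : Y (2 * n + 2) = r * Y (2 * n + 1) - Y (2 * n) := hYrec (2 * n)
        have e2 : Y (2 * n + 3) = r * Y (2 * n + 2) - Y (2 * n + 1) := hYrec (2 * n + 1)
        have idx1 : 2 * (n + 1) = 2 * n + 2 := by ring
        have idx2 : 2 * (n + 1) + 1 = 2 * n + 3 := by ring
        refine ⟨?_, ?_⟩
        · rw [idx1]
          have heq : Y (2 * n + 2) - 2 =
              r * (Y (2 * n + 1) - (r + b)) - (Y (2 * n) - 2) + b * (a + r) := by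
            rw [e1]; linear_combination -hr
          rw [heq]
          exact dvd_add (dvd_sub (h2.mul_left r) h1) ⟨a + r, rfl⟩
        · rw [idx2]
          have heven : b ∣ Y (2 * n + 2) - 2 := by
            have heq : Y (2 * n + 2) - 2 =
                r * (Y (2 * n + 1) - (r + b)) - (Y (2 * n) - 2) + b * (a + r) := by
              rw [e1]; linear_combination -hr
            rw [heq]
            exact dvd_add (dvd_sub (h2.mul_left r) h1) ⟨a + r, rfl⟩
          have heq : Y (2 * n + 3) - (r + b) =
              r * (Y (2 * n + 2) - 2) - (Y (2 * n + 1) - (r + b)) + b * (-2) := by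
            rw [e2]; ring
          rw [heq]
          exact dvd_add (dvd_sub (heven.mul_left r) h2) ⟨-2, rfl⟩
    intro h
    constructor
    · rintro ⟨k, hk⟩
      have hk' : h = 2 * k := by omega
      subst hk'
      exact Int.modEq_iff_dvd.mpr (by simpa using dvd_neg.mpr (key k).1)
    · rintro ⟨k, hk⟩
      subst hk
      rw [hY1]
      exact Int.modEq_iff_dvd.mpr (by simpa using dvd_neg.mpr (key k).2)
  · -- Part 2
    have key4 : ∀ n : ℕ, W (n + 4) = (x ^ 2 - 2) * W (n + 2) - W n := by
      intro n
      have e0 : W (n + 2) = x * W (n + 1) - W n := hWrec n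
      have e1 : W (n + 3) = x * W (n + 2) - W (n + 1) := hWrec (n + 1)
      have e2 : W (n + 4) = x * W (n + 3) - W (n + 2) := hWrec (n + 2)
      linear_combination e2 + x * e1 + e0
    have main : ∀ l : ℕ,
        d ^ 2 ∣ W (2 * l) - (2 * ε + d * (a * ε * (l : ℤ) ^ 2 + x * (l : ℤ))) ∧
        d ^ 2 ∣ W (2 * (l + 1)) -
          (2 * ε + d * (a * ε * ((l : ℤ) + 1) ^ 2 + x * ((l : ℤ) + 1))) := by
      intro l
      induction l with
      | zero =>
        constructor
        · have : W (2 * 0) - (2 * ε + d * (a * ε * ((0 : ℕ) : ℤ) ^ 2 + x * ((0 : ℕ) : ℤ))) = 0 := by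
            norm_num [hW0]
          rw [this]; exact dvd_zero _
        · have e : W 2 = x * W 1 - W 0 := hWrec 0
          have : W (2 * (0 + 1)) - (2 * ε + d * (a * ε * (((0 : ℕ) : ℤ) + 1) ^ 2
              + x * (((0 : ℕ) : ℤ) + 1))) = 0 := by
            norm_num [e, hW0, hW1]
            linear_combination (-ε) * hx
          rw [this]; exact dvd_zero _
      | succ n ih =>
        obtain ⟨hP0, hP1⟩ := ih
        refine ⟨hP1, ?_⟩
        obtain ⟨c0, hc0⟩ := hP0
        obtain ⟨c1, hc1⟩ := hP1
        have e : W (2 * n + 4) = (x ^ 2 - 2) * W (2 * n + 2) - W (2 * n) := key4 (2 * n)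
        have idx1 : 2 * (n + 1) = 2 * n + 2 := by ring
        have idx2 : 2 * (n + 1 + 1) = 2 * n + 4 := by ring
        rw [idx1] at hc1
        rw [idx2]
        push_cast at hc0 hc1 ⊢
        refine ⟨(x ^ 2 - 2) * c1 - c0 + a * (a * ε * ((n : ℤ) + 1) ^ 2 + x * ((n : ℤ) + 1)), ?_⟩
        linear_combination e + (x ^ 2 - 2) * hc1 - hc0 -
          (2 * ε + d * (a * ε * ((n : ℤ) + 1) ^ 2 + x * ((n : ℤ) + 1))) * hx
    intro l
    exact Int.modEq_iff_dvd.mpr (by simpa using dvd_neg.mpr (main l).1)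
end

section
/- Let {a,b,c,d,e} be a D(4)-quintuple with a<b<c<d<e, and let x,y,z be positive integers with ad+4=x², bd+4=y², cd+4=z². Write the common value W (with be+4 and de+4 determined by e) as W = W^{(a,d)}_{2l} = W^{(b,d)}_{2m} = W^{(c,d)}_{2n} for the standard recurrence sequences with initial terms 2ε, and ε=±1. Then aεl² + xl ≡ bεm² + ym ≡ cεn² + zn (mod d). -/
lemma keyW (a d x ε : ℤ) (W : ℕ → ℤ) (hx : a * d + 4 = x ^ 2)
    (h0 : W 0 = 2 * ε) (h1 : W 1 = ε * x + d)
    (hrec : ∀ k : ℕ, W (k + 2) = x * W (k + 1) - W k) :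
    ∀ k : ℕ, d ^ 2 ∣ W (2 * k) - (2 * ε + d * (a * ε * (k : ℤ) ^ 2 + x * k)) := by
  have step : ∀ k : ℕ, W (2 * k + 4) = (x ^ 2 - 2) * W (2 * k + 2) - W (2 * k) := by
    intro k
    have h1' := hrec (2 * k + 2)
    have h2' := hrec (2 * k + 1)
    have h3' := hrec (2 * k)
    have e1 : 2 * k + 2 + 2 = 2 * k + 4 := by ring
    have e2 : 2 * k + 2 + 1 = 2 * k + 3 := by ring
    have e3 : 2 * k + 1 + 2 = 2 * k + 3 := by ring
    have e4 : 2 * k + 1 + 1 = 2 * k + 2 := by ring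
    have e5 : 2 * k + 0 + 2 = 2 * k + 2 := by ring
    have e6 : 2 * k + 1 = 2 * k + 1 := rfl
    rw [e1, e2] at h1'
    rw [e3, e4] at h2'
    rw [show 2 * k + 2 = 2 * k + 2 from rfl] at h3'
    linear_combination h1' + x * h2' + h3'
  -- strong two-step induction
  have main : ∀ k : ℕ,
      (d ^ 2 ∣ W (2 * k) - (2 * ε + d * (a * ε * (k : ℤ) ^ 2 + x * k))) ∧
      (d ^ 2 ∣ W (2 * (k + 1)) - (2 * ε + d * (a * ε * ((k : ℤ) + 1) ^ 2 + x * ((k : ℤ) + 1)))) := by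
    intro k
    induction k with
    | zero =>
      constructor
      · rw [show 2 * 0 = 0 from rfl, h0]; push_cast; ring_nf; exact dvd_zero _
      · have h2 := hrec 0
        rw [show (0 : ℕ) + 2 = 2 from rfl, show (0 : ℕ) + 1 = 1 from rfl, h1, h0] at h2
        rw [show 2 * (0 + 1) = 2 from rfl, h2]
        refine ⟨0, ?_⟩
        push_cast
        linear_combination (-ε) * hx
    | succ k ih =>
      obtain ⟨⟨u, hu⟩, ⟨v, hv⟩⟩ := ih
      refine ⟨⟨v, hv⟩, ?_⟩
      have hst := step k
      refine ⟨(x ^ 2 - 2) * v - u + a * (a * ε * ((k : ℤ) + 1) ^ 2 + x * ((k : ℤ) + 1)), ?_⟩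
      have hk : (2 * (k + 1 + 1)) = 2 * k + 4 := by ring
      have hk2 : 2 * (k + 1) = 2 * k + 2 := by ring
      rw [hk2] at hv
      rw [hk, hst]
      push_cast
      push_cast at hv hu ⊢
      linear_combination (x ^ 2 - 2) * hv - hu
        - (2 * ε + d * (a * ε * ((k:ℤ)+1) ^ 2 + x * ((k:ℤ)+1))) * hx
  intro k; exact (main k).1

/-- Classical congruences for a D(4)-quintuple:
aεl² + xl ≡ bεm² + ym ≡ cεn² + zn (mod d). -/
theorem stmt10 (a b c d e r s t x y z ε : ℤ) (Wa Wb Wc : ℕ → ℤ) (l m n : ℕ)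
    (ha : 0 < a) (hab : a < b) (hbc : b < c) (hcd : c < d) (hde : d < e)
    (hr : a * b + 4 = r ^ 2) (hs : a * c + 4 = s ^ 2) (ht : b * c + 4 = t ^ 2)
    (hx : a * d + 4 = x ^ 2) (hy : b * d + 4 = y ^ 2) (hz : c * d + 4 = z ^ 2)
    (hrpos : 0 < r) (hspos : 0 < s) (htpos : 0 < t)
    (hxpos : 0 < x) (hypos : 0 < y) (hzpos : 0 < z)
    (hae : ∃ X : ℤ, a * e + 4 = X ^ 2) (hbe : ∃ Y : ℤ, b * e + 4 = Y ^ 2)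
    (hce : ∃ Z : ℤ, c * e + 4 = Z ^ 2) (hde4 : ∃ W : ℤ, d * e + 4 = W ^ 2)
    (hε : ε = 1 ∨ ε = -1)
    (hWa0 : Wa 0 = 2 * ε) (hWa1 : Wa 1 = ε * x + d)
    (hWarec : ∀ k : ℕ, Wa (k + 2) = x * Wa (k + 1) - Wa k)
    (hWb0 : Wb 0 = 2 * ε) (hWb1 : Wb 1 = ε * y + d)
    (hWbrec : ∀ k : ℕ, Wb (k + 2) = y * Wb (k + 1) - Wb k)
    (hWc0 : Wc 0 = 2 * ε) (hWc1 : Wc 1 = ε * z + d)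
    (hWcrec : ∀ k : ℕ, Wc (k + 2) = z * Wc (k + 1) - Wc k)
    (hW : ∃ W : ℤ, d * e + 4 = W ^ 2 ∧ Wa (2 * l) = W)
    (hab' : Wa (2 * l) = Wb (2 * m)) (hbc' : Wb (2 * m) = Wc (2 * n)) :
    a * ε * (l : ℤ) ^ 2 + x * (l : ℤ) ≡ b * ε * (m : ℤ) ^ 2 + y * (m : ℤ) [ZMOD d] ∧
    b * ε * (m : ℤ) ^ 2 + y * (m : ℤ) ≡ c * ε * (n : ℤ) ^ 2 + z * (n : ℤ) [ZMOD d] := by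
  have hd0 : (d : ℤ) ≠ 0 := by
    have : (0:ℤ) < d := by linarith
    exact this.ne'
  have hA := keyW a d x ε Wa hx hWa0 hWa1 hWarec l
  have hB := keyW b d y ε Wb hy hWb0 hWb1 hWbrec m
  have hC := keyW c d z ε Wc hz hWc0 hWc1 hWcrec n
  have key : ∀ (P Q : ℤ), d ^ 2 ∣ d * P - d * Q →
      P ≡ Q [ZMOD d] := by
    intro P Q ⟨w, hw⟩
    have : P - Q = d * w := by
      have : d * (P - Q) = d * (d * w) := by ring_nf; ring_nf at hw; linarith
      exact mul_left_cancel₀ hd0 this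
    exact Int.ModEq.symm (Int.modEq_iff_dvd.mpr ⟨w, this⟩)
  constructor
  · apply key
    obtain ⟨u, hu⟩ := hA; obtain ⟨v, hv⟩ := hB
    exact ⟨v - u, by rw [hab'] at hu; linear_combination hv - hu⟩
  · apply key
    obtain ⟨u, hu⟩ := hB; obtain ⟨v, hv⟩ := hC
    exact ⟨v - u, by rw [hbc'] at hu; linear_combination hv - hu⟩
end

section
/- Let a<b<d be positive integers with ab+4=r², ad+4=x², bd+4=y² (r,x,y positive integers), b > 10⁵, d > ab·max{ab,4b,a+b+2r} (so d > abc for some D(4)-triple extension with c>b). Suppose the recurrence solutions satisfy Y^{(a,b)}_{2h} = Y^{(b,d)}_{2m} with initial data Y^{(a,b)}₀ = 2, X₀=2 and Y^{(b,d)}₀ = 2, W₀ = 2ε. Then h ≥ 2m. -/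
lemma seq_facts (c : ℤ) (f : ℕ → ℤ) (hc : 2 ≤ c) (h0 : 0 < f 0) (h01 : f 0 < f 1)
    (hrec : ∀ k, f (k + 2) = c * f (k + 1) - f k) : ∀ k, 0 < f k ∧ f k < f (k + 1) := by
  intro k
  induction k with
  | zero => exact ⟨h0, h01⟩
  | succ n ih =>
    obtain ⟨h1, h2⟩ := ih
    refine ⟨h1.trans h2, ?_⟩
    rw [hrec n]
    nlinarith

lemma lem_r317 (a b r : ℤ) (ha : 1 ≤ a) (hb : 100001 ≤ b) (hr2 : r ^ 2 = a * b + 4)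
    (hrpos : 0 < r) : 317 ≤ r := by
  by_contra hcon
  push_neg at hcon
  have hs : 100001 ≤ a * b := le_trans hb (le_mul_of_one_le_left (by linarith) ha)
  nlinarith

lemma lem_316 (a b y : ℤ) (ha : 1 ≤ a) (hb : 100001 ≤ b) (hy : 0 < y)
    (h2 : (a * b) * (a * b) * b + b + 4 ≤ y ^ 2) : 316 * b + 1 ≤ y := by
  by_contra hcon
  push_neg at hcon
  have hy0 : y ≤ 316 * b := by linarith
  have hbpos : (0:ℤ) < b := by linarith
  have t1 : y * y ≤ (316 * b) * (316 * b) := mul_self_le_mul_self hy.le hy0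
  have t2 : b * b ≤ (a * b) * (a * b) :=
    mul_self_le_mul_self hbpos.le (le_mul_of_one_le_left hbpos.le ha)
  have t3 : 100001 * (b * b) ≤ b * (b * b) :=
    mul_le_mul_of_nonneg_right hb (by positivity)
  have t4 : b * b * b ≤ (a * b) * (a * b) * b :=
    mul_le_mul_of_nonneg_right t2 hbpos.le
  nlinarith

lemma lem_yr (a b y r : ℤ) (ha : 1 ≤ a) (hb : 100001 ≤ b) (hy : 0 < y)
    (hr2 : r ^ 2 = a * b + 4)
    (h2 : (a * b) * (a * b) * b + b + 4 ≤ y ^ 2) : r ^ 2 + 2 ≤ y := by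
  by_contra hcon
  push_neg at hcon
  have hs : 100001 ≤ a * b := le_trans hb (le_mul_of_one_le_left (by linarith) ha)
  have hy0 : y ≤ a * b + 5 := by linarith
  have t1 : y * y ≤ (a * b + 5) * (a * b + 5) := mul_self_le_mul_self hy.le hy0
  have hss : 100001 * (a * b) ≤ (a * b) * (a * b) :=
    mul_le_mul_of_nonneg_right hs (by linarith)
  have t3 : 100001 * ((a * b) * (a * b)) ≤ b * ((a * b) * (a * b)) :=
    mul_le_mul_of_nonneg_right hb (by positivity)
  nlinarith

lemma lem_keyA (a b r y : ℤ) (ha : 1 ≤ a) (hb : 100001 ≤ b) (hr2 : r ^ 2 = a * b + 4)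
    (hr317 : 317 ≤ r) (hrpos : 0 < r) (hy : 0 < y)
    (h2 : (a * b) * (a * b) * b + b + 4 ≤ y ^ 2) (h316 : 316 * b + 1 ≤ y) :
    r ^ 3 * (r + b) + b * y + 2 ≤ y ^ 2 := by
  have hbpos : (0:ℤ) < b := by linarith
  have hs : 100001 ≤ a * b := le_trans hb (le_mul_of_one_le_left hbpos.le ha)
  have hss : 100001 * (a * b) ≤ (a * b) * (a * b) :=
    mul_le_mul_of_nonneg_right hs (by linarith)
  have k1 : 317 * (r ^ 3 * b) ≤ r ^ 4 * b := by
    have := mul_le_mul_of_nonneg_right hr317 (show (0:ℤ) ≤ r ^ 3 * b by positivity)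
    nlinarith
  have e : r ^ 2 * r ^ 2 = (a * b + 4) * (a * b + 4) := by rw [hr2]
  have k2 : r ^ 4 ≤ 2 * ((a * b) * (a * b)) := by nlinarith
  have k3 : r ^ 4 * b ≤ 2 * y ^ 2 := by
    have := mul_le_mul_of_nonneg_right k2 hbpos.le
    nlinarith
  have k4 : 100001 * r ^ 4 ≤ 2 * y ^ 2 := by
    have := mul_le_mul_of_nonneg_right hb (show (0:ℤ) ≤ r ^ 4 by positivity)
    nlinarith
  have k5 : 316 * (b * y) ≤ y ^ 2 := by
    have t : 316 * b ≤ y := by linarith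
    have := mul_le_mul_of_nonneg_right t hy.le
    nlinarith
  have k6 : (100001:ℤ) * 100001 * 100001 ≤ y ^ 2 := by
    have t : (100001:ℤ) * 100001 ≤ (a * b) * (a * b) := by nlinarith
    have := mul_le_mul t hb (by norm_num) (by positivity)
    nlinarith
  nlinarith

lemma lem_upper4 (r u0 u1 u2 u3 u4 : ℤ) (hr : 0 < r) (h1 : u4 ≤ r * u3)
    (h2 : u3 ≤ r * u2) (h3 : u2 ≤ r * u1) (h4 : u1 ≤ r * u0) :
    u4 ≤ r ^ 4 * u0 := by
  have c4 := mul_le_mul_of_nonneg_left h4 hr.le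
  have c3 := mul_le_mul_of_nonneg_left c4 hr.le
  have c2 := mul_le_mul_of_nonneg_left c3 hr.le
  have d3 := mul_le_mul_of_nonneg_left h3 hr.le
  have d2 := mul_le_mul_of_nonneg_left d3 hr.le
  have e2 := mul_le_mul_of_nonneg_left h2 hr.le
  nlinarith

lemma lem_upper3 (r u1 u2 u3 u4 : ℤ) (hr : 0 < r) (h1 : u4 ≤ r * u3)
    (h2 : u3 ≤ r * u2) (h3 : u2 ≤ r * u1) :
    u4 ≤ r ^ 3 * u1 := by
  have d3 := mul_le_mul_of_nonneg_left h3 hr.le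
  have d2 := mul_le_mul_of_nonneg_left d3 hr.le
  have e2 := mul_le_mul_of_nonneg_left h2 hr.le
  nlinarith

lemma lem_lower2 (y v0 v1 v2 : ℤ) (hy : 0 ≤ y - 1) (h1 : (y - 1) * v1 ≤ v2)
    (h2 : (y - 1) * v0 ≤ v1) : (y - 1) ^ 2 * v0 ≤ v2 := by
  have := mul_le_mul_of_nonneg_left h2 hy
  nlinarith

lemma lem_mid (r y p q : ℤ) (hr : 0 < r) (hq : 0 < q) (hpq : p ≤ q)
    (hry : r ^ 2 ≤ y - 1) : r ^ 4 * p ≤ (y - 1) ^ 2 * q := by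
  have hr4 : r ^ 4 ≤ (y - 1) ^ 2 := by
    have := mul_self_le_mul_self (show (0:ℤ) ≤ r ^ 2 by positivity) hry
    nlinarith
  have c1 := mul_le_mul_of_nonneg_left hpq (show (0:ℤ) ≤ r ^ 4 by positivity)
  have c2 := mul_le_mul_of_nonneg_right hr4 hq.le
  linarith

/-- If Y^{(a,b)}_{2h} = Y^{(b,d)}_{2m} in the setting of a D(4)-quintuple
(b > 10⁵, d > ab·max{ab,4b,a+b+2r}), then h ≥ 2m. -/
theorem stmt11 (a b d r x y ε : ℤ) (Yab Ybd : ℕ → ℤ) (h m : ℕ)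
    (ha : 0 < a) (hab : a < b) (hbd : b < d) (hb5 : b > 10 ^ 5)
    (hr : a * b + 4 = r ^ 2) (hx : a * d + 4 = x ^ 2) (hy : b * d + 4 = y ^ 2)
    (hrpos : 0 < r) (hxpos : 0 < x) (hypos : 0 < y)
    (hdbig : d > a * b * max (a * b) (max (4 * b) (a + b + 2 * r)))
    (hε : ε = 1 ∨ ε = -1)
    (hY0 : Yab 0 = 2) (hY1 : Yab 1 = r + b)
    (hYrec : ∀ k : ℕ, Yab (k + 2) = r * Yab (k + 1) - Yab k)
    (hZ0 : Ybd 0 = 2) (hZ1 : Ybd 1 = y + ε * b)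
    (hZrec : ∀ k : ℕ, Ybd (k + 2) = y * Ybd (k + 1) - Ybd k)
    (heq : Yab (2 * h) = Ybd (2 * m)) :
    2 * m ≤ h := by
  have hb1 : (100001 : ℤ) ≤ b := by norm_num at hb5; linarith
  have ha1 : (1 : ℤ) ≤ a := ha
  have hbpos : (0:ℤ) < b := by linarith
  have hr2 : r ^ 2 = a * b + 4 := hr.symm
  have hr317 : (317 : ℤ) ≤ r := lem_r317 a b r ha1 hb1 hr2 hrpos
  have hd1 : a * b * (a * b) < d := by
    calc a * b * (a * b) ≤ a * b * max (a * b) (max (4 * b) (a + b + 2 * r)) := by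
          apply mul_le_mul_of_nonneg_left (le_max_left _ _) (by positivity)
      _ < d := hdbig
  have hy2 : (a * b) * (a * b) * b + b + 4 ≤ y ^ 2 := by
    have hd2 : a * b * (a * b) + 1 ≤ d := hd1
    have := mul_le_mul_of_nonneg_left hd2 hbpos.le
    linarith only [this, hy, mul_le_mul_of_nonneg_left hd2 hbpos.le]
  have hy316 : 316 * b + 1 ≤ y := lem_316 a b y ha1 hb1 hypos hy2
  have hyr : r ^ 2 + 2 ≤ y := lem_yr a b y r ha1 hb1 hypos hr2 hy2
  have keyA : r ^ 3 * (r + b) + b * y + 2 ≤ y ^ 2 :=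
    lem_keyA a b r y ha1 hb1 hr2 hr317 hrpos hypos hy2 hy316
  -- sequence facts
  have hYf := seq_facts r Yab (by linarith) (by rw [hY0]; norm_num)
      (by rw [hY0, hY1]; linarith) hYrec
  have hZ01 : Ybd 0 < Ybd 1 := by
    rcases hε with rfl | rfl <;> rw [hZ0, hZ1] <;> linarith
  have hZf := seq_facts y Ybd (by linarith) (by rw [hZ0]; norm_num) hZ01 hZrec
  have hYmono : StrictMono Yab := strictMono_nat_of_lt_succ (fun k => (hYf k).2)
  have hub : ∀ k, Yab (k + 2) ≤ r * Yab (k + 1) := by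
    intro k; rw [hYrec k]; linarith only [(hYf k).1]
  have hlb : ∀ k, (y - 1) * Ybd (k + 1) ≤ Ybd (k + 2) := by
    intro k; rw [hZrec k]
    linarith only [(hZf k).2, (hZf k).1]
  have hY4 : Yab 4 ≤ r ^ 3 * (r + b) := by
    have t := lem_upper3 r (Yab 1) (Yab 2) (Yab 3) (Yab 4) hrpos (hub 2) (hub 1) (hub 0)
    rw [hY1] at t
    exact t
  have hZ2 : y ^ 2 - b * y - 2 ≤ Ybd 2 := by
    have e := hZrec 0
    rw [hZ0, hZ1] at e
    rcases hε with rfl | rfl <;> rw [e] <;>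
      linarith only [mul_pos hbpos hypos]
  have claim : ∀ M : ℕ, Yab (4 * M) ≤ Ybd (2 * M) := by
    intro M
    induction M with
    | zero => simp [hY0, hZ0]
    | succ n ih =>
      match n, ih with
      | 0, _ =>
        calc Yab (4 * 1) = Yab 4 := by norm_num
          _ ≤ r ^ 3 * (r + b) := hY4
          _ ≤ y ^ 2 - b * y - 2 := by linarith only [keyA]
          _ ≤ Ybd 2 := hZ2
          _ = Ybd (2 * 1) := by norm_num
      | Nat.succ j, ih =>
        set n := j + 1 with hn
        have u4 : Yab (4 * n + 1) ≤ r * Yab (4 * n) := by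
          have t := hub (4 * j + 3)
          have e : 4 * j + 3 + 2 = 4 * n + 1 := by omega
          have e2 : 4 * j + 3 + 1 = 4 * n := by omega
          rw [e, e2] at t
          exact t
        have hupper : Yab (4 * n + 4) ≤ r ^ 4 * Yab (4 * n) :=
          lem_upper4 r (Yab (4 * n)) (Yab (4 * n + 1)) (Yab (4 * n + 2))
            (Yab (4 * n + 3)) (Yab (4 * n + 4)) hrpos (hub (4 * n + 2))
            (hub (4 * n + 1)) (hub (4 * n)) u4
        have l2 : (y - 1) * Ybd (2 * n) ≤ Ybd (2 * n + 1) := by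
          have t := hlb (2 * j + 1)
          have e : 2 * j + 1 + 2 = 2 * n + 1 := by omega
          have e2 : 2 * j + 1 + 1 = 2 * n := by omega
          rw [e, e2] at t
          exact t
        have hlower : (y - 1) ^ 2 * Ybd (2 * n) ≤ Ybd (2 * n + 2) :=
          lem_lower2 y (Ybd (2 * n)) (Ybd (2 * n + 1)) (Ybd (2 * n + 2))
            (by linarith only [hy316, hb1]) (hlb (2 * n)) l2
        have hmid : r ^ 4 * Yab (4 * n) ≤ (y - 1) ^ 2 * Ybd (2 * n) :=
          lem_mid r y (Yab (4 * n)) (Ybd (2 * n)) hrpos (hZf (2 * n)).1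
            (by rw [hn]; exact ih) (by linarith only [hyr])
        have e1 : 4 * (n + 1) = 4 * n + 4 := by omega
        have e2 : 2 * (n + 1) = 2 * n + 2 := by omega
        rw [e1, e2]
        linarith only [hupper, hmid, hlower]
  have hfin : Yab (4 * m) ≤ Yab (2 * h) := by rw [heq]; exact claim m
  have := hYmono.le_iff_le.mp hfin
  omega
end

section
/- Let {a,b,c,d,e} be a D(4)-quintuple with a<b<c<d<e such that c=a+b+2r (r=√(ab+4)), d=rst with s=a+r, t=b+r, and let z=st+2, x=rs−2, and write the associated recurrence indices l,n (with n<l≤2n) for the common solution W=W^{(a,d)}_{2l}=W^{(c,d)}_{2n}. Assume the congruence aεl²+xl ≡ cεn²+zn (mod d) holds with ε=±1, and also that aεl²+xl ≠ cεn²+zn as integers. Then d < cn² + zn. -/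
set_option maxHeartbeats 1000000 in
/-- If in a D(4)-quintuple with regular first triple the two sides of the
classical congruence aεl²+xl ≡ cεn²+zn (mod d) are unequal integers,
then d < cn² + zn. -/
theorem stmt14 (a b c d e r s t x z ε : ℤ) (l n : ℕ)
    (ha : 0 < a) (hab : a < b) (hbc : b < c) (hcd : c < d) (hde : d < e)
    (hr : a * b + 4 = r ^ 2) (hrpos : 0 < r)
    (hc : c = a + b + 2 * r) (hs : s = a + r) (ht : t = b + r)
    (hdd : d = r * s * t) (hx : x = r * s - 2) (hz : z = s * t + 2)
    (hae : ∃ X : ℤ, a * e + 4 = X ^ 2) (hbe : ∃ Y : ℤ, b * e + 4 = Y ^ 2)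
    (hce : ∃ Z : ℤ, c * e + 4 = Z ^ 2) (hde4 : ∃ W : ℤ, d * e + 4 = W ^ 2)
    (hε : ε = 1 ∨ ε = -1)
    (hn8 : 8 ≤ n) (hnl : n < l) (hl2n : l ≤ 2 * n)
    (hcong : a * ε * (l : ℤ) ^ 2 + x * (l : ℤ) ≡ c * ε * (n : ℤ) ^ 2 + z * (n : ℤ) [ZMOD d])
    (hneq : a * ε * (l : ℤ) ^ 2 + x * (l : ℤ) ≠ c * ε * (n : ℤ) ^ 2 + z * (n : ℤ)) :
    d < c * (n : ℤ) ^ 2 + z * (n : ℤ) := by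
  have hN8 : (8 : ℤ) ≤ (n : ℤ) := by exact_mod_cast hn8
  have hNL : (n : ℤ) < (l : ℤ) := by exact_mod_cast hnl
  have hL2N : (l : ℤ) ≤ 2 * (n : ℤ) := by exact_mod_cast hl2n
  have hN0 : (0 : ℤ) < (n : ℤ) := by linarith
  have hL0 : (0 : ℤ) < (l : ℤ) := by linarith
  -- basic inequalities
  have hra : a < r := by nlinarith
  have hr3 : 3 ≤ r := by nlinarith
  have hrb : r ≤ b := by
    by_contra h
    push_neg at h
    nlinarith
  have hspos : 0 < s := by rw [hs]; linarith
  have htpos : 0 < t := by rw [ht]; linarith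
  have hxpos : 0 < x := by rw [hx, hs]; nlinarith
  have hzpos : 0 < z := by rw [hz]; nlinarith
  have h2rt : 2 * r ≤ t := by rw [ht]; linarith
  have h2xz : 2 * x ≤ z := by
    have := mul_le_mul_of_nonneg_left h2rt hspos.le
    rw [hx, hz]; nlinarith
  have hc4a : 4 * a < c := by rw [hc]; linarith
  have hd0 : 0 < d := by linarith
  -- the divisibility
  have hdvd : d ∣ (c * ε * (n : ℤ) ^ 2 + z * (n : ℤ)) - (a * ε * (l : ℤ) ^ 2 + x * (l : ℤ)) :=
    hcong.dvd
  have hne : (c * ε * (n : ℤ) ^ 2 + z * (n : ℤ)) - (a * ε * (l : ℤ) ^ 2 + x * (l : ℤ)) ≠ 0 := by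
    intro h
    exact hneq (by linarith)
  have hdle : d ≤ |(c * ε * (n : ℤ) ^ 2 + z * (n : ℤ)) - (a * ε * (l : ℤ) ^ 2 + x * (l : ℤ))| :=
    Int.le_of_dvd (abs_pos.mpr hne) ((dvd_abs _ _).mpr hdvd)
  -- bounds on the pieces
  have haL0 : 0 < a * (l : ℤ) ^ 2 := by positivity
  have hl2 : (l : ℤ) ^ 2 ≤ 4 * (n : ℤ) ^ 2 := by
    nlinarith [mul_nonneg (by linarith : (0:ℤ) ≤ 2 * (n:ℤ) - l) (by linarith : (0:ℤ) ≤ 2 * (n:ℤ) + l)]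
  have haLcN : a * (l : ℤ) ^ 2 < c * (n : ℤ) ^ 2 := by
    nlinarith [mul_le_mul_of_nonneg_left hl2 ha.le, mul_pos (mul_pos hN0 hN0) (by linarith : (0:ℤ) < c - 4 * a)]
  have hxL0 : 0 < x * (l : ℤ) := by positivity
  have hxLzN : x * (l : ℤ) ≤ z * (n : ℤ) := by
    nlinarith [mul_le_mul_of_nonneg_left hL2N hxpos.le, mul_le_mul_of_nonneg_right h2xz hN0.le]
  rcases abs_cases ((c * ε * (n : ℤ) ^ 2 + z * (n : ℤ)) - (a * ε * (l : ℤ) ^ 2 + x * (l : ℤ)))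
      with ⟨h1, _⟩ | ⟨h1, _⟩ <;>
    rcases hε with hε | hε <;> subst hε <;> rw [h1] at hdle <;> linarith
end

section
/- Let a,b,r be positive integers with ab+4=r², a<b, r>2, and let c=a+b+2r, s=a+r, t=b+r, d=rst, z=st+2. If n is a positive integer with n ≤ r/2, then d > cn² + zn. -/
/-- For a regular D(4)-triple with d = rst, z = st+2: d > cn² + zn whenever n ≤ r/2. -/
theorem stmt15 (a b r c s t d z n : ℕ)
    (ha : 0 < a) (hab : a < b) (hr : a * b + 4 = r ^ 2) (hr2 : 2 < r)
    (hc : c = a + b + 2 * r) (hs : s = a + r) (ht : t = b + r)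
    (hd : d = r * s * t) (hz : z = s * t + 2)
    (hn : 2 * n ≤ r) :
    c * n ^ 2 + z * n < d := by
  subst hc hs ht hd hz
  have key : 4 * ((a + b + 2 * r) * n ^ 2 + ((a + r) * (b + r) + 2) * n)
      < 4 * (r * (a + r) * (b + r)) := by
    have h1 : (a + b + 2 * r) * (2 * n) ^ 2 ≤ (a + b + 2 * r) * r ^ 2 :=
      Nat.mul_le_mul_left _ (Nat.pow_le_pow_left hn 2)
    have h2 : ((a + r) * (b + r) + 2) * (2 * n) ≤ ((a + r) * (b + r) + 2) * r :=
      Nat.mul_le_mul_left _ hn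
    have hb : 2 ≤ b := hab.trans_le' ha
    nlinarith [sq_nonneg r, sq_nonneg n, Nat.one_le_iff_ne_zero.mpr (by omega : r ≠ 0)]
  omega
end

section
/- If {a,b,c,d,e} is a D(4)-quintuple with a<b<c<d<e and b ≥ a+57√a and b>10⁵, and Y₀ is an integer with |Y₀| < b^{3/4}·a^{−1/4} satisfying aY₀² − bX₀² = 4(a−b) for some positive integer X₀, then b·X₀ − r·|Y₀| > 0 and b·X₀ − r·|Y₀| < 2b, where r=√(ab+4). -/
set_option maxHeartbeats 1000000 in
/-- In a D(4)-quintuple with b ≥ a+57√a and b > 10⁵, any fundamental solution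
(X₀,Y₀) of aY₀²−bX₀² = 4(a−b) with |Y₀| < b^{3/4}a^{−1/4} satisfies
0 < bX₀ − r|Y₀| < 2b. -/
theorem stmt16 (a b c d e : ℕ) (r X₀ Y₀ : ℤ)
    (ha : 0 < a) (hab : a < b) (hbc : b < c) (hcd : c < d) (hde : d < e)
    (hsab : (a : ℤ) * b + 4 = r ^ 2) (hrpos : 0 < r)
    (hsac : ∃ k : ℕ, a * c + 4 = k ^ 2) (hsbc : ∃ k : ℕ, b * c + 4 = k ^ 2)
    (hsad : ∃ k : ℕ, a * d + 4 = k ^ 2) (hsbd : ∃ k : ℕ, b * d + 4 = k ^ 2)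
    (hscd : ∃ k : ℕ, c * d + 4 = k ^ 2)
    (hsae : ∃ k : ℕ, a * e + 4 = k ^ 2) (hsbe : ∃ k : ℕ, b * e + 4 = k ^ 2)
    (hsce : ∃ k : ℕ, c * e + 4 = k ^ 2) (hsde : ∃ k : ℕ, d * e + 4 = k ^ 2)
    (hb57 : (b : ℝ) ≥ (a : ℝ) + 57 * Real.sqrt (a : ℝ)) (hb5 : b > 10 ^ 5)
    (hX : 0 < X₀)
    (hY : ((|Y₀| : ℤ) : ℝ) < (b : ℝ) ^ ((3 : ℝ) / 4) * (a : ℝ) ^ (-(1 : ℝ) / 4))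
    (heq : (a : ℤ) * Y₀ ^ 2 - (b : ℤ) * X₀ ^ 2 = 4 * ((a : ℤ) - (b : ℤ))) :
    0 < (b : ℤ) * X₀ - r * |Y₀| ∧ (b : ℤ) * X₀ - r * |Y₀| < 2 * b := by
  have haR : (1 : ℝ) ≤ (a : ℝ) := by exact_mod_cast ha
  have ha0 : (0 : ℝ) < (a : ℝ) := by linarith
  have hbR : (100000 : ℝ) < (b : ℝ) := by exact_mod_cast hb5
  have hb0 : (0 : ℝ) < (b : ℝ) := by linarith
  set s := Real.sqrt (a : ℝ) with hs
  set t := Real.sqrt (b : ℝ) with ht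
  have hs1 : (1 : ℝ) ≤ s := Real.one_le_sqrt.mpr haR
  have hs2 : s ^ 2 = (a : ℝ) := Real.sq_sqrt ha0.le
  have ht2 : t ^ 2 = (b : ℝ) := Real.sq_sqrt hb0.le
  have ht0 : 0 ≤ t := Real.sqrt_nonneg _
  have ht300 : (300 : ℝ) < t := by nlinarith
  have hkey : t ≤ ((b : ℝ) - (a : ℝ)) * s := by
    rcases le_or_gt t (57 * s ^ 2) with h | h
    · nlinarith
    · nlinarith
  have habR : (a : ℝ) < (b : ℝ) := by exact_mod_cast hab
  have hsqrtbd : (b : ℝ) ^ ((3 : ℝ) / 4) * (a : ℝ) ^ (-(1 : ℝ) / 4)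
      ≤ Real.sqrt ((b : ℝ) * ((b : ℝ) - (a : ℝ))) := by
    rw [Real.le_sqrt (by positivity) (by nlinarith)]
    have h1 : ((b : ℝ) ^ ((3 : ℝ) / 4) * (a : ℝ) ^ (-(1 : ℝ) / 4)) ^ 2
        = (b : ℝ) ^ ((3 : ℝ) / 2) * (a : ℝ) ^ (-(1 : ℝ) / 2) := by
      rw [mul_pow, ← Real.rpow_natCast ((b:ℝ) ^ ((3:ℝ)/4)) 2,
        ← Real.rpow_natCast ((a:ℝ) ^ (-(1:ℝ)/4)) 2,
        ← Real.rpow_mul hb0.le, ← Real.rpow_mul ha0.le]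
      norm_num
    have h2 : (b : ℝ) ^ ((3 : ℝ) / 2) = (b : ℝ) * t := by
      rw [ht, Real.sqrt_eq_rpow, ← Real.rpow_one_add' hb0.le (by norm_num)]
      norm_num
    have h3 : (a : ℝ) ^ (-(1 : ℝ) / 2) = s⁻¹ := by
      rw [hs, Real.sqrt_eq_rpow, ← Real.rpow_neg_one ((a:ℝ) ^ (1/(2:ℝ))),
        ← Real.rpow_mul ha0.le]
      norm_num
    rw [h1, h2, h3]
    have hs0 : (0 : ℝ) < s := by linarith
    have hds : t / s ≤ (b : ℝ) - (a : ℝ) := by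
      rw [div_le_iff₀ hs0]; exact hkey
    calc (b : ℝ) * t * s⁻¹ = (b : ℝ) * (t / s) := by ring
      _ ≤ (b : ℝ) * ((b : ℝ) - (a : ℝ)) := mul_le_mul_of_nonneg_left hds hb0.le
  -- Y₀² < b(b-a) as integers
  have hY2R : ((|Y₀| : ℤ) : ℝ) < Real.sqrt ((b : ℝ) * ((b : ℝ) - (a : ℝ))) :=
    lt_of_lt_of_le hY hsqrtbd
  have hY2R' : ((|Y₀| : ℤ) : ℝ) ^ 2 < (b : ℝ) * ((b : ℝ) - (a : ℝ)) := by
    rw [← Real.lt_sqrt (by positivity)]; exact hY2R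
  have hY2 : Y₀ ^ 2 < (b : ℤ) * ((b : ℤ) - (a : ℤ)) := by
    have : ((Y₀ ^ 2 : ℤ) : ℝ) < (((b : ℤ) * ((b : ℤ) - (a : ℤ)) : ℤ) : ℝ) := by
      push_cast
      rw [← sq_abs (Y₀ : ℝ)]
      push_cast at hY2R' ⊢
      convert hY2R' using 2 <;> push_cast <;> ring
    exact_mod_cast this
  -- product identity
  have habZ : (a : ℤ) < (b : ℤ) := by exact_mod_cast hab
  have hbZ : (0 : ℤ) < (b : ℤ) := by positivity
  have hprod : ((b : ℤ) * X₀ - r * |Y₀|) * ((b : ℤ) * X₀ + r * |Y₀|)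
      = 4 * b * ((b : ℤ) - a) - 4 * Y₀ ^ 2 := by
    have hsq : |Y₀| ^ 2 = Y₀ ^ 2 := sq_abs Y₀
    linear_combination (-(b : ℤ)) * heq + Y₀ ^ 2 * hsab - r ^ 2 * hsq
  have hBpos : 0 < (b : ℤ) * X₀ + r * |Y₀| := by
    have h1 : 0 < (b : ℤ) * X₀ := mul_pos hbZ hX
    have h2 : 0 ≤ r * |Y₀| := mul_nonneg hrpos.le (abs_nonneg Y₀)
    linarith
  have hprodpos : 0 < ((b : ℤ) * X₀ - r * |Y₀|) * ((b : ℤ) * X₀ + r * |Y₀|) := by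
    rw [hprod]; nlinarith
  constructor
  · by_contra h
    push_neg at h
    nlinarith
  · by_contra h
    push_neg at h
    have hY0 : (0 : ℤ) ≤ r * |Y₀| := mul_nonneg hrpos.le (abs_nonneg Y₀)
    nlinarith [sq_nonneg Y₀]
end
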